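/- arXiv:1701.04270 — 16 statements merged into one kernel-verified Lean document; each statement's English description precedes it below -/
import Mathlib

section
/- Under Assumption 1, for every x ∈ V one has q(x) < 1 if and only if x ∈ Bᶜ and the set A is reachable from x. -/
/-!
The committor `q` equals `1` on `B`, `0` on `A \ B`, and is harmonic off `A ∪ B`; the path-sum
definition enters only through this one-step recursion and the bound `q ≤ 1`, obtained by
truncating paths by length.

If `A` is reachable from `x ∉ B`, the strict mean value inequality propagates `q < 1` backwards
along the path from its endpoint in `A` to `x`. Conversely, let `S` be the set of points outside
`B` from which `A` is unreachable: `q` is harmonic on `S`, a positive step leaves `S` only into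
`B`, where `q = 1`, and by Assumption 1 every point of `S` reaches `B`. At a minimiser of `q` on
`S` all positive steps lead to minimisers, so following a path to `B` shows the minimum is `1`.
-/

open scoped ENNReal

-- `pathProb p x l` : probability that the chain with transition matrix `p` follows the
-- finite path `x :: l` (here `p x y` is the probability `p(y|x)` of jumping from `x` to `y`).
noncomputable def pathProb {V : Type*} (p : V → V → ℝ) : V → List V → ℝ≥0∞
  | _, [] => 1
  | x, y :: ys => ENNReal.ofReal (p x y) * pathProb p y ys

-- The finite path lies outside `S ∪ T` at all nodes except its last one, which lies in `S`;
-- such paths realize exactly the event `τ_S < τ_T`.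
def HitsFirst {V : Type*} (S T : Finset V) : List V → Prop
  | [] => False
  | [x] => x ∈ S
  | x :: y :: ys => x ∉ S ∧ x ∉ T ∧ HitsFirst S T (y :: ys)

-- `hitProb p S T x` : the probability `P(τ_{S,x} < τ_{T,x})` that the chain started at `x`
-- hits `S` strictly before `T`, written as the sum over all first-passage paths to `S`.
open Classical in
noncomputable def hitProb {V : Type*} (p : V → V → ℝ) (S T : Finset V) (x : V) : ℝ≥0∞ :=
  ∑' l : List V, if HitsFirst S T (x :: l) then pathProb p x l else 0

-- `S` (with `S = A` or `S = B`) is reachable from `x` : there is a finite path of positive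
-- transition probabilities from `x` to `S` whose interior nodes avoid `A ∪ B`.
def ReachableFrom {V : Type*} [DecidableEq V] (p : V → V → ℝ) (A B S : Finset V) (x : V) :
    Prop :=
  ∃ (k : ℕ) (c : ℕ → V), c 0 = x ∧ c k ∈ S ∧
    (∀ l, 1 ≤ l → l ≤ k - 1 → c l ∉ A ∪ B) ∧
    ∀ l, l < k → 0 < p (c l) (c (l + 1))

-- Assumption 1 of the paper.
def Assumption1 {V : Type*} [Fintype V] [DecidableEq V] (p : V → V → ℝ) (A B : Finset V) :
    Prop :=
  ((A ∪ B)ᶜ : Finset V).Nonempty ∧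
  (∀ x ∈ (A ∪ B)ᶜ, ReachableFrom p A B A x ∨ ReachableFrom p A B B x) ∧
  ∀ x ∈ A, ReachableFrom p A B B x

section HitProb

variable {V : Type*} {p : V → V → ℝ} {S T : Finset V} {x : V}

-- Indexing by `ℕ∞` makes the recursion at `n = ⊤` the one-step recursion of `hitProb`.
open Classical in
noncomputable def hitProbWithin (p : V → V → ℝ) (S T : Finset V) (n : ℕ∞) (x : V) : ℝ≥0∞ :=
  ∑' l : List V,
    if HitsFirst S T (x :: l) ∧ (l.length : ℕ∞) < n then pathProb p x l else 0

theorem hitProbWithin_top : hitProbWithin p S T ⊤ = hitProb p S T := by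
  ext x
  refine tsum_congr fun l => ?_
  congr 1
  exact propext (and_iff_left (ENat.natCast_lt_top _))

theorem hitProbWithin_add_one_of_mem (hx : x ∈ S) (n : ℕ∞) :
    hitProbWithin p S T (n + 1) x = 1 := by
  rw [hitProbWithin, tsum_eq_single []]
  · simp [HitsFirst, hx, pathProb]
  · rintro (_ | ⟨y, ys⟩) h
    · exact absurd rfl h
    · simp [HitsFirst, hx]

theorem hitProbWithin_of_mem_right (hxS : x ∉ S) (hxT : x ∈ T) (n : ℕ∞) :
    hitProbWithin p S T n x = 0 := by
  refine ENNReal.tsum_eq_zero.mpr fun l => if_neg fun h => ?_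
  rcases l with _ | ⟨y, ys⟩
  exacts [hxS h.1, h.1.2.1 hxT]

theorem hitProbWithin_add_one_of_notMem [Fintype V] (hxS : x ∉ S) (hxT : x ∉ T) (n : ℕ∞) :
    hitProbWithin p S T (n + 1) x = ∑ y, ENNReal.ofReal (p x y) * hitProbWithin p S T n y := by
  have hcons : Function.Injective fun yl : V × List V => yl.1 :: yl.2 :=
    fun a b h => Prod.ext (List.cons.inj h).1 (List.cons.inj h).2
  rw [hitProbWithin, ← hcons.tsum_eq, ENNReal.tsum_prod', tsum_fintype]
  · refine Finset.sum_congr rfl fun y _ => ?_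
    rw [hitProbWithin, ← ENNReal.tsum_mul_left]
    refine tsum_congr fun ys => ?_
    rw [mul_ite, mul_zero, pathProb]
    congr 1
    simp [HitsFirst, hxS, hxT]
  · rintro (_ | ⟨y, ys⟩) h
    · simp [HitsFirst, hxS] at h
    · exact ⟨(y, ys), rfl⟩

theorem sum_ofReal_eq_one [Fintype V] {w : V → ℝ} (hw0 : ∀ y, 0 ≤ w y) (hw1 : ∑ y, w y = 1) :
    ∑ y, ENNReal.ofReal (w y) = 1 := by
  rw [← ENNReal.ofReal_sum_of_nonneg fun y _ => hw0 y, hw1, ENNReal.ofReal_one]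

theorem hitProbWithin_le_one [Fintype V] (hp0 : ∀ x y, 0 ≤ p x y) (hp1 : ∀ x, ∑ y, p x y = 1)
    (n : ℕ) (x : V) : hitProbWithin p S T n x ≤ 1 := by
  induction n generalizing x with
  | zero => simp [hitProbWithin]
  | succ n ih =>
    rw [Nat.cast_succ]
    by_cases hxS : x ∈ S
    · rw [hitProbWithin_add_one_of_mem hxS]
    by_cases hxT : x ∈ T
    · simp [hitProbWithin_of_mem_right hxS hxT]
    calc hitProbWithin p S T (n + 1) x
        = ∑ y, ENNReal.ofReal (p x y) * hitProbWithin p S T n y :=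
          hitProbWithin_add_one_of_notMem hxS hxT n
      _ ≤ ∑ y, ENNReal.ofReal (p x y) := by gcongr with y; exact mul_le_of_le_one_right' (ih y)
      _ = 1 := sum_ofReal_eq_one (hp0 x) (hp1 x)

theorem hitProb_of_mem (hx : x ∈ S) : hitProb p S T x = 1 := by
  rw [← hitProbWithin_top, ← top_add (1 : ℕ∞), hitProbWithin_add_one_of_mem hx]

theorem hitProb_of_mem_right (hxS : x ∉ S) (hxT : x ∈ T) : hitProb p S T x = 0 := by
  rw [← hitProbWithin_top, hitProbWithin_of_mem_right hxS hxT]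

theorem hitProb_of_notMem [Fintype V] (hxS : x ∉ S) (hxT : x ∉ T) :
    hitProb p S T x = ∑ y, ENNReal.ofReal (p x y) * hitProb p S T y := by
  simpa only [top_add, hitProbWithin_top] using
    hitProbWithin_add_one_of_notMem (p := p) hxS hxT ⊤

open Classical in
theorem hitProb_le_one [Fintype V] (hp0 : ∀ x y, 0 ≤ p x y) (hp1 : ∀ x, ∑ y, p x y = 1) :
    hitProb p S T x ≤ 1 := by
  refine tsum_le_of_sum_le' zero_le_one fun F => ?_
  set N : ℕ := F.sup List.length + 1
  calc ∑ l ∈ F, (if HitsFirst S T (x :: l) then pathProb p x l else 0)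
      = ∑ l ∈ F, (if HitsFirst S T (x :: l) ∧ (l.length : ℕ∞) < N then pathProb p x l else 0) := by
        refine Finset.sum_congr rfl fun l hl => ?_
        congr 1
        exact propext (and_iff_left (by exact_mod_cast Nat.lt_succ_of_le (F.le_sup hl))).symm
    _ ≤ hitProbWithin p S T N x := ENNReal.sum_le_tsum F
    _ ≤ 1 := hitProbWithin_le_one hp0 hp1 N x

theorem hitProb_ne_top [Fintype V] (hp0 : ∀ x y, 0 ≤ p x y) (hp1 : ∀ x, ∑ y, p x y = 1) :
    hitProb p S T x ≠ ⊤ :=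
  ne_top_of_le_ne_top ENNReal.one_ne_top (hitProb_le_one hp0 hp1)

end HitProb

section MeanValue

variable {V : Type*} [Fintype V] {w h : V → ℝ} {c : ℝ} {y : V}

theorem sum_mul_lt_of_le_of_lt (hw0 : ∀ z, 0 ≤ w z) (hw1 : ∑ z, w z = 1)
    (hle : ∀ z, 0 < w z → h z ≤ c) (hy : 0 < w y) (hlt : h y < c) :
    ∑ z, w z * h z < c := by
  calc ∑ z, w z * h z < ∑ z, w z * c := by
        refine Finset.sum_lt_sum (fun z _ => ?_) ⟨y, Finset.mem_univ y, by gcongr⟩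
        rcases (hw0 z).eq_or_lt with hz | hz
        · simp [← hz]
        · exact mul_le_mul_of_nonneg_left (hle z hz) hz.le
    _ = c := by rw [← Finset.sum_mul, hw1, one_mul]

theorem lt_sum_mul_of_le_of_lt (hw0 : ∀ z, 0 ≤ w z) (hw1 : ∑ z, w z = 1)
    (hle : ∀ z, 0 < w z → c ≤ h z) (hy : 0 < w y) (hlt : c < h y) :
    c < ∑ z, w z * h z := by
  have := sum_mul_lt_of_le_of_lt (h := -h) (c := -c) hw0 hw1 (fun z hz => neg_le_neg (hle z hz))
    hy (neg_lt_neg hlt)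
  simpa [Finset.sum_neg_distrib] using this

end MeanValue

theorem le_of_harmonicOn {V : Type*} [Fintype V] {p : V → V → ℝ} (hp0 : ∀ x y, 0 ≤ p x y)
    (hp1 : ∀ x, ∑ y, p x y = 1) {h : V → ℝ} {S : Finset V} {c : ℝ}
    (hharm : ∀ y ∈ S, h y = ∑ z, p y z * h z)
    (hbdry : ∀ y ∈ S, ∀ z, 0 < p y z → z ∈ S ∨ c ≤ h z)
    (hexit : ∀ y ∈ S, ∃ (k : ℕ) (γ : ℕ → V),
      γ 0 = y ∧ γ k ∉ S ∧ ∀ l < k, 0 < p (γ l) (γ (l + 1))) :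
    ∀ y ∈ S, c ≤ h y := by
  intro y hy
  by_contra! hlt
  obtain ⟨y₀, hy₀, hmin⟩ := S.exists_min_image h ⟨y, hy⟩
  have hm : h y₀ < c := (hmin y hy).trans_lt hlt
  -- successors of a minimiser are minimisers, and they stay in `S` since the minimum is `< c`
  have step : ∀ y ∈ S, h y = h y₀ → ∀ z, 0 < p y z → z ∈ S ∧ h z = h y₀ := by
    intro y hy hy_eq z hz
    have hge : ∀ z, 0 < p y z → h y₀ ≤ h z := fun z hz =>
      (hbdry y hy z hz).elim (hmin z) fun hcz => hm.le.trans hcz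
    have hz_eq : h z = h y₀ := (hge z hz).antisymm' <| not_lt.mp fun hlt' =>
      (lt_sum_mul_of_le_of_lt (hp0 y) (hp1 y) hge hz hlt').ne (hy_eq ▸ hharm y hy)
    exact ⟨(hbdry y hy z hz).resolve_right (hz_eq ▸ hm).not_ge, hz_eq⟩
  obtain ⟨k, γ, hγ0, hγk, hγ⟩ := hexit y₀ hy₀
  have hpath : ∀ l ≤ k, γ l ∈ S ∧ h (γ l) = h y₀ := by
    intro l hl
    induction l with
    | zero => rw [hγ0]; exact ⟨hy₀, rfl⟩
    | succ l ih =>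
      obtain ⟨hS, heq⟩ := ih (by omega)
      exact step _ hS heq _ (hγ l (by omega))
  exact hγk (hpath k le_rfl).1

section Committor

variable {V : Type*} {p : V → V → ℝ} {A B : Finset V} {x : V}

noncomputable def committor (p : V → V → ℝ) (A B : Finset V) (x : V) : ℝ :=
  (hitProb p B A x).toReal

theorem committor_of_mem (hx : x ∈ B) : committor p A B x = 1 := by
  simp [committor, hitProb_of_mem hx]

theorem committor_of_mem_left (hxA : x ∈ A) (hxB : x ∉ B) : committor p A B x = 0 := by
  simp [committor, hitProb_of_mem_right hxB hxA]

theorem committor_le_one [Fintype V] (hp0 : ∀ x y, 0 ≤ p x y) (hp1 : ∀ x, ∑ y, p x y = 1) :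
    committor p A B x ≤ 1 :=
  ENNReal.toReal_le_of_le_ofReal zero_le_one (by simpa using hitProb_le_one hp0 hp1)

theorem hitProb_lt_one_iff_committor_lt_one [Fintype V] (hp0 : ∀ x y, 0 ≤ p x y)
    (hp1 : ∀ x, ∑ y, p x y = 1) : hitProb p B A x < 1 ↔ committor p A B x < 1 := by
  rw [committor, ← ENNReal.toReal_one, ENNReal.toReal_lt_toReal (hitProb_ne_top hp0 hp1)
    ENNReal.one_ne_top]

theorem committor_of_notMem [Fintype V] (hp0 : ∀ x y, 0 ≤ p x y) (hp1 : ∀ x, ∑ y, p x y = 1)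
    (hxA : x ∉ A) (hxB : x ∉ B) : committor p A B x = ∑ y, p x y * committor p A B y := by
  rw [committor, hitProb_of_notMem hxB hxA, ENNReal.toReal_sum fun y _ =>
    ENNReal.mul_ne_top ENNReal.ofReal_ne_top (hitProb_ne_top hp0 hp1)]
  simp only [ENNReal.toReal_mul, ENNReal.toReal_ofReal (hp0 x _), committor]

end Committor

section Reachability

variable {V : Type*} [DecidableEq V] {p : V → V → ℝ} {A B : Finset V} {x y z : V}

theorem reachableFrom_of_mem (hx : x ∈ A) : ReachableFrom p A B A x :=
  ⟨0, fun _ => x, rfl, hx, fun _ h1 h2 => absurd (h1.trans h2) (by omega),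
    fun _ h => absurd h (Nat.not_lt_zero _)⟩

theorem ReachableFrom.of_step (hyz : 0 < p y z) (hz : z ∉ B) (h : ReachableFrom p A B A z) :
    ReachableFrom p A B A y := by
  by_cases hzA : z ∈ A
  · refine ⟨1, fun i => if i = 0 then y else z, rfl, by simpa using hzA,
      fun l h1 h2 => absurd (h1.trans h2) (by omega), fun l hl => ?_⟩
    obtain rfl : l = 0 := by omega
    simpa using hyz
  obtain ⟨k, c, rfl, hck, hint, hpos⟩ := h
  refine ⟨k + 1, fun i => if i = 0 then y else c (i - 1), rfl, by simpa using hck,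
    fun l h1 h2 => ?_, fun l hl => ?_⟩
  · rcases l with _ | _ | l
    · omega
    · simpa [hzA] using hz
    · simpa using hint (l + 1) (by omega) (by omega)
  · rcases l with _ | l
    · simpa using hyz
    · simpa using hpos l (by omega)

theorem committor_lt_one_of_reachableFrom [Fintype V] (hp0 : ∀ x y, 0 ≤ p x y)
    (hp1 : ∀ x, ∑ y, p x y = 1) (hAB : Disjoint A B) (hx : x ∉ B)
    (h : ReachableFrom p A B A x) : committor p A B x < 1 := by
  obtain ⟨k, c, rfl, hck, hint, hpos⟩ := h
  induction k generalizing c with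
  | zero => simp [committor_of_mem_left hck hx]
  | succ k ih =>
    by_cases hA : c 0 ∈ A
    · simp [committor_of_mem_left hA hx]
    have hc1 : c 1 ∉ B := by
      rcases k with _ | k
      · exact Finset.disjoint_left.mp hAB hck
      · exact fun hB => hint 1 le_rfl (by omega) (Finset.mem_union_right A hB)
    have hlt : committor p A B (c 1) < 1 := ih (fun i => c (i + 1)) hc1 hck
      (fun l h1 h2 => hint (l + 1) (by omega) (by omega)) (fun l hl => hpos (l + 1) (by omega))
    rw [committor_of_notMem hp0 hp1 hA hx]
    exact sum_mul_lt_of_le_of_lt (hp0 _) (hp1 _) (fun y _ => committor_le_one hp0 hp1)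
      (hpos 0 (by omega)) hlt

theorem committor_eq_one_of_not_reachableFrom [Fintype V] (hp0 : ∀ x y, 0 ≤ p x y)
    (hp1 : ∀ x, ∑ y, p x y = 1)
    (hreach : ∀ x ∈ (A ∪ B)ᶜ, ReachableFrom p A B A x ∨ ReachableFrom p A B B x)
    (hx : x ∉ B) (h : ¬ ReachableFrom p A B A x) : committor p A B x = 1 := by
  classical
  set S := Finset.univ.filter fun y => y ∉ B ∧ ¬ ReachableFrom p A B A y
  have hmem : ∀ {y}, y ∈ S ↔ y ∉ B ∧ ¬ ReachableFrom p A B A y := by simp [S]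
  have hSA : ∀ y ∈ S, y ∉ A := fun y hy hyA => (hmem.mp hy).2 (reachableFrom_of_mem hyA)
  refine (committor_le_one hp0 hp1).antisymm (le_of_harmonicOn hp0 hp1 (S := S) ?_ ?_ ?_ x
    (hmem.mpr ⟨hx, h⟩))
  · exact fun y hy => committor_of_notMem hp0 hp1 (hSA y hy) (hmem.mp hy).1
  · intro y hy z hz
    by_cases hzB : z ∈ B
    · exact Or.inr (committor_of_mem hzB).ge
    · exact Or.inl (hmem.mpr ⟨hzB, fun hzA => (hmem.mp hy).2 (hzA.of_step hz hzB)⟩)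
  · intro y hy
    have hyAB : y ∈ (A ∪ B)ᶜ := by simpa [not_or] using ⟨hSA y hy, (hmem.mp hy).1⟩
    obtain ⟨k, γ, hγ0, hγk, -, hγ⟩ := (hreach y hyAB).resolve_left (hmem.mp hy).2
    exact ⟨k, γ, hγ0, fun hS => (hmem.mp hS).1 hγk, hγ⟩

end Reachability

theorem committor_lt_one_iff_general {V : Type*} [Fintype V] [DecidableEq V]
    (p : V → V → ℝ) (A B : Finset V)
    (hAB : Disjoint A B)
    (hp0 : ∀ x y, 0 ≤ p x y) (hp1 : ∀ x, ∑ y, p x y = 1)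
    (h1 : Assumption1 p A B) :
    ∀ x : V, hitProb p B A x < 1 ↔ (x ∉ B ∧ ReachableFrom p A B A x) := by
  intro x
  rw [hitProb_lt_one_iff_committor_lt_one hp0 hp1]
  refine ⟨fun hlt => ?_, fun ⟨hxB, hreach⟩ =>
    committor_lt_one_of_reachableFrom hp0 hp1 hAB hxB hreach⟩
  have hxB : x ∉ B := fun hxB => (committor_of_mem hxB).not_lt hlt
  exact ⟨hxB, by_contra fun hreach =>
    hlt.ne (committor_eq_one_of_not_reachableFrom hp0 hp1 h1.2.1 hxB hreach)⟩

/-- Under Assumption 1, for every `x ∈ V` the committor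
`q(x) = P(τ_{B,x} < τ_{A,x}) = hitProb p B A x` satisfies `q(x) < 1` if and only if
`x ∈ Bᶜ` and the set `A` is reachable from `x`. -/
theorem committor_lt_one_iff {V : Type*} [Fintype V] [DecidableEq V]
    (p : V → V → ℝ) (A B : Finset V)
    (hAB : Disjoint A B) (hA : A.Nonempty) (hB : B.Nonempty)
    (hp0 : ∀ x y, 0 ≤ p x y) (hp1 : ∀ x, ∑ y, p x y = 1)
    (h1 : Assumption1 p A B) :
    ∀ x : V, hitProb p B A x < 1 ↔ (x ∉ B ∧ ReachableFrom p A B A x) :=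
  committor_lt_one_iff_general p A B hAB hp0 hp1 h1
end

section
/- Under Assumption 1, for every x ∈ Bᶜ one has Σ_{z∈V} p(z|x) q(z) > 0 if and only if the set B is reachable from x; equivalently, x ∈ V⁺ := {x ∈ Bᶜ : Σ_{z∈V} p(z|x) q(z) > 0} if and only if x ∈ Bᶜ and B is reachable from x. -/
open scoped ENNReal

/-! The sum is positive iff some successor `y` of `x` has positive committor, and `q(y) > 0` iff
some first-passage path from `y` to `B` avoiding `A` has positive probability. Prefixed with the
step from `x` to `y`, these paths are exactly the paths witnessing that `B` is reachable from `x`. -/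

section Paths

variable {V : Type*} (p : V → V → ℝ)

theorem pathProb_ne_zero_iff (x : V) (l : List V) :
    pathProb p x l ≠ 0 ↔ List.IsChain (fun a b => 0 < p a b) (x :: l) := by
  induction l generalizing x with
  | nil => simp [pathProb]
  | cons y ys ih =>
    simp only [pathProb, ne_eq, mul_eq_zero, not_or, ENNReal.ofReal_eq_zero, not_le,
      List.isChain_cons_cons]
    exact and_congr Iff.rfl (ih y)

theorem hitProb_ne_zero_iff (S T : Finset V) (x : V) :
    hitProb p S T x ≠ 0 ↔
      ∃ l, HitsFirst S T (x :: l) ∧ List.IsChain (fun a b => 0 < p a b) (x :: l) := by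
  simp only [hitProb, ne_eq, ENNReal.tsum_eq_zero, ite_eq_right_iff, not_forall,
    ← pathProb_ne_zero_iff, exists_prop]

end Paths

section Reachability

variable {V : Type*} [DecidableEq V] {p : V → V → ℝ} {A B S : Finset V} {x y : V}

theorem reachableFrom_of_pos_of_mem (hxy : 0 < p x y) (hy : y ∈ S) :
    ReachableFrom p A B S x :=
  ⟨1, fun n => if n = 0 then x else y, rfl, by simpa using hy, by omega,
    fun l hl => by simpa [Nat.lt_one_iff.mp hl] using hxy⟩

theorem ReachableFrom.cons (hxy : 0 < p x y) (hy : y ∉ A ∪ B)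
    (h : ReachableFrom p A B S y) : ReachableFrom p A B S x := by
  obtain ⟨k, c, hc0, hck, hint, hpos⟩ := h
  refine ⟨k + 1, fun n => if n = 0 then x else c (n - 1), by simp, by simpa using hck, ?_, ?_⟩
  · intro l hl1 hlk
    obtain rfl | hl := eq_or_ne l 1
    · simpa [hc0] using hy
    · simpa [show l ≠ 0 by omega] using hint (l - 1) (by omega) (by omega)
  · rintro (_ | l) hl
    · simpa [hc0] using hxy
    · simpa using hpos l (by omega)

theorem reachableFrom_of_hitsFirst (l : List V) (hxy : 0 < p x y)
    (hl : HitsFirst B A (y :: l)) (hchain : List.IsChain (fun a b => 0 < p a b) (y :: l)) :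
    ReachableFrom p A B B x := by
  induction l generalizing x y with
  | nil => exact reachableFrom_of_pos_of_mem hxy hl
  | cons z zs ih =>
    obtain ⟨hyB, hyA, hl⟩ := hl
    rw [List.isChain_cons_cons] at hchain
    exact (ih hchain.1 hl hchain.2).cons hxy (by simp [hyA, hyB])

theorem exists_hitsFirst_of_path (k : ℕ) (c : ℕ → V) (hck : c k ∈ B)
    (hint : ∀ l < k, c l ∉ A ∪ B) (hpos : ∀ l < k, 0 < p (c l) (c (l + 1))) :
    ∃ L, HitsFirst B A (c 0 :: L) ∧ List.IsChain (fun a b => 0 < p a b) (c 0 :: L) := by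
  induction k generalizing c with
  | zero => exact ⟨[], hck, List.isChain_singleton _⟩
  | succ k ih =>
    obtain ⟨L, hL, hchain⟩ := ih (fun n => c (n + 1)) hck
      (fun l hl => hint (l + 1) (by omega)) (fun l hl => hpos (l + 1) (by omega))
    have h0 : c 0 ∉ A ∪ B := hint 0 k.succ_pos
    rw [Finset.mem_union, not_or] at h0
    exact ⟨c 1 :: L, ⟨h0.2, h0.1, hL⟩, List.isChain_cons_cons.mpr ⟨hpos 0 k.succ_pos, hchain⟩⟩

theorem reachableFrom_iff_exists_step (hx : x ∉ B) :
    ReachableFrom p A B B x ↔ ∃ y, 0 < p x y ∧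
      ∃ l, HitsFirst B A (y :: l) ∧ List.IsChain (fun a b => 0 < p a b) (y :: l) := by
  constructor
  · rintro ⟨k, c, rfl, hck, hint, hpos⟩
    obtain ⟨k, rfl⟩ : ∃ j, k = j + 1 := Nat.exists_eq_succ_of_ne_zero (by rintro rfl; exact hx hck)
    exact ⟨c 1, hpos 0 k.succ_pos, exists_hitsFirst_of_path k (fun n => c (n + 1)) hck
      (fun l hl => hint (l + 1) (by omega) (by omega)) (fun l hl => hpos (l + 1) (by omega))⟩
  · rintro ⟨y, hxy, l, hl, hchain⟩
    exact reachableFrom_of_hitsFirst l hxy hl hchain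

end Reachability

theorem mem_Vplus_iff_reachable_general {V : Type*} [Fintype V] [DecidableEq V]
    (p : V → V → ℝ) (A B : Finset V) :
    ∀ x : V, x ∉ B →
      ((0 < ∑ z, ENNReal.ofReal (p x z) * hitProb p B A z) ↔ ReachableFrom p A B B x) := by
  intro x hx
  rw [reachableFrom_iff_exists_step hx, pos_iff_ne_zero, Ne, Finset.sum_eq_zero_iff]
  simp only [Finset.mem_univ, true_implies, mul_eq_zero, ENNReal.ofReal_eq_zero, not_forall,
    not_or, not_le, ← hitProb_ne_zero_iff]

/-- Under Assumption 1, for every `x ∈ Bᶜ` one has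
`Σ_{z∈V} p(z|x) q(z) > 0` if and only if the set `B` is reachable from `x`; here
`q z = hitProb p B A z` is the committor.  Equivalently, `x` belongs to
`V⁺ = {x ∈ Bᶜ : Σ_{z∈V} p(z|x) q(z) > 0}` iff `x ∈ Bᶜ` and `B` is reachable from `x`. -/
theorem mem_Vplus_iff_reachable {V : Type*} [Fintype V] [DecidableEq V]
    (p : V → V → ℝ) (A B : Finset V)
    (hAB : Disjoint A B) (hA : A.Nonempty) (hB : B.Nonempty)
    (hp0 : ∀ x y, 0 ≤ p x y) (hp1 : ∀ x, ∑ y, p x y = 1)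
    (h1 : Assumption1 p A B) :
    ∀ x : V, x ∉ B →
      ((0 < ∑ z, ENNReal.ofReal (p x z) * hitProb p B A z) ↔ ReachableFrom p A B B x) :=
  mem_Vplus_iff_reachable_general p A B
end

section
/- If q satisfies the committor system, then p̄ is a stochastic matrix on V⁻ ∪ {0}: for every y ∈ V⁻ one has p̄(x|y) ≥ 0 for all x ∈ V⁻ ∪ {0} and Σ_{x∈V⁻∪{0}} p̄(x|y) = 1. -/
open Classical

-- `pbar p q A y x` is the transition probability `p̄(x|y)` of the nonreactive chain on
-- `V⁻ ∪ {0}`: the virtual node `0` is encoded as `none`, and a node `x ∈ V⁻` as `some x`.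
-- Here `p y x` is the probability `p(x|y)` of jumping from `y` to `x`.
noncomputable def pbar {V : Type*} [Fintype V] [DecidableEq V]
    (p : V → V → ℝ) (q : V → ℝ) (A : Finset V) : V → Option V → ℝ
  | y, some x => p y x * (1 - q x) / (1 - q y)
  | y, none => if y ∈ A then ∑ z, p y z * q z else 0

section Nonreactive

variable {V : Type*} [Fintype V] [DecidableEq V] (p : V → V → ℝ) (q : V → ℝ) (A : Finset V)

lemma pbar_none_nonneg (hp0 : ∀ x y, 0 ≤ p x y) (hq0 : ∀ x, 0 ≤ q x) (y : V) :
    0 ≤ pbar p q A y none := by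
  simp only [pbar]
  split_ifs
  · exact Finset.sum_nonneg fun z _ => mul_nonneg (hp0 y z) (hq0 z)
  · exact le_rfl

lemma pbar_some_nonneg (hp0 : ∀ x y, 0 ≤ p x y) {x y : V} (hx : q x < 1) (hy : q y < 1) :
    0 ≤ pbar p q A y (some x) :=
  div_nonneg (mul_nonneg (hp0 y x) (sub_nonneg.2 hx.le)) (sub_nonneg.2 hy.le)

/-- On `A` one has `q y = 0`, and off `A ∪ B` the numerator vanishes by harmonicity of `q`. -/
lemma pbar_none_eq (B : Finset V) (hqA : ∀ x ∈ A, q x = 0) (hqB : ∀ x ∈ B, q x = 1)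
    (hqE : ∀ x, x ∉ A ∪ B → q x = ∑ y, p x y * q y) {y : V} (hy : q y < 1) :
    pbar p q A y none = (∑ z, p y z * q z - q y) / (1 - q y) := by
  by_cases hyA : y ∈ A
  · simp [pbar, hyA, hqA y hyA]
  · have hyB : y ∉ B := fun hyB => hy.ne (hqB y hyB)
    have hharm := hqE y (by simp [hyA, hyB])
    simp [pbar, hyA, ← hharm]

lemma sum_pbar_some_eq (hp1 : ∀ x, ∑ y, p x y = 1) (hq1 : ∀ x, q x ≤ 1) (y : V) :
    ∑ x ∈ Finset.univ.filter (fun x => q x < 1), pbar p q A y (some x)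
      = (1 - ∑ z, p y z * q z) / (1 - q y) := by
  have hvanish : ∀ x ∈ Finset.univ, p y x * (1 - q x) / (1 - q y) ≠ 0 → q x < 1 := by
    intro x _ hx
    refine lt_of_le_of_ne (hq1 x) fun hqx => hx ?_
    simp [hqx]
  calc ∑ x ∈ Finset.univ.filter (fun x => q x < 1), pbar p q A y (some x)
      = ∑ x, p y x * (1 - q x) / (1 - q y) := Finset.sum_filter_of_ne hvanish
    _ = (1 - ∑ z, p y z * q z) / (1 - q y) := by
      rw [← Finset.sum_div]
      simp [mul_sub, Finset.sum_sub_distrib, hp1 y]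

end Nonreactive

theorem pbar_isStochastic_general {V : Type*} [Fintype V] [DecidableEq V]
    (p : V → V → ℝ) (q : V → ℝ) (A B : Finset V)
    (hp0 : ∀ x y, 0 ≤ p x y) (hp1 : ∀ x, ∑ y, p x y = 1)
    (hq0 : ∀ x, 0 ≤ q x) (hq1 : ∀ x, q x ≤ 1)
    (hqA : ∀ x ∈ A, q x = 0) (hqB : ∀ x ∈ B, q x = 1)
    (hqE : ∀ x, x ∉ A ∪ B → q x = ∑ y, p x y * q y) :
    ∀ y, q y < 1 →
      (0 ≤ pbar p q A y none) ∧
      (∀ x, q x < 1 → 0 ≤ pbar p q A y (some x)) ∧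
      pbar p q A y none
        + ∑ x ∈ Finset.univ.filter (fun x => q x < 1), pbar p q A y (some x) = 1 := by
  intro y hy
  refine ⟨pbar_none_nonneg p q A hp0 hq0 y, fun x hx => pbar_some_nonneg p q A hp0 hx hy, ?_⟩
  rw [pbar_none_eq p q A B hqA hqB hqE hy, sum_pbar_some_eq p q A hp1 hq1, ← add_div]
  exact (div_eq_one_iff_eq (sub_ne_zero.2 hy.ne')).2 (by ring)

/-- If `q` satisfies the committor system, then `p̄` is a stochastic matrix
on `V⁻ ∪ {0}`: for every `y ∈ V⁻` one has `p̄(x|y) ≥ 0` for all `x ∈ V⁻ ∪ {0}`, and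
`Σ_{x ∈ V⁻ ∪ {0}} p̄(x|y) = 1` (the sum being `p̄(0|y) + Σ_{x ∈ V⁻} p̄(x|y)`),
where `V⁻ = {x ∈ V : q x < 1}`. -/
theorem pbar_isStochastic {V : Type*} [Fintype V] [DecidableEq V]
    (p : V → V → ℝ) (q : V → ℝ) (A B : Finset V)
    (hAB : Disjoint A B) (hA : A.Nonempty) (hB : B.Nonempty)
    (hp0 : ∀ x y, 0 ≤ p x y) (hp1 : ∀ x, ∑ y, p x y = 1)
    (hq0 : ∀ x, 0 ≤ q x) (hq1 : ∀ x, q x ≤ 1)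
    (hqA : ∀ x ∈ A, q x = 0) (hqB : ∀ x ∈ B, q x = 1)
    (hqE : ∀ x, x ∉ A ∪ B → q x = ∑ y, p x y * q y) :
    ∀ y, q y < 1 →
      (0 ≤ pbar p q A y none) ∧
      (∀ x, q x < 1 → 0 ≤ pbar p q A y (some x)) ∧
      pbar p q A y none
        + ∑ x ∈ Finset.univ.filter (fun x => q x < 1), pbar p q A y (some x) = 1 :=
  pbar_isStochastic_general p q A B hp0 hp1 hq0 hq1 hqA hqB hqE
end

section
/- If q satisfies the committor system, μ is a probability distribution on A, and θ̄ satisfies the nonreactive balance equation, then Σ_{x∈A} θ̄(x) · (Σ_{z∈V} p(z|x) q(z)) = 1. -/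
open Classical

/-- If `q` satisfies the committor system, `μ` is a probability
distribution on `A`, and `θ̄` satisfies the nonreactive balance equation
`θ̄(x) = μ(x)·1_A(x) + Σ_{y∈V⁻} θ̄(y) p̄(x|y)` for every `x ∈ V⁻ = {q < 1}`, then
`Σ_{x∈A} θ̄(x) · (Σ_{z∈V} p(z|x) q(z)) = 1`. -/
theorem thetaBar_weighted_sum_eq_one {V : Type*} [Fintype V] [DecidableEq V]
    (p : V → V → ℝ) (q : V → ℝ) (A B : Finset V)
    (hAB : Disjoint A B) (hA : A.Nonempty) (hB : B.Nonempty)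
    (hp0 : ∀ x y, 0 ≤ p x y) (hp1 : ∀ x, ∑ y, p x y = 1)
    (hq0 : ∀ x, 0 ≤ q x) (hq1 : ∀ x, q x ≤ 1)
    (hqA : ∀ x ∈ A, q x = 0) (hqB : ∀ x ∈ B, q x = 1)
    (hqE : ∀ x, x ∉ A ∪ B → q x = ∑ y, p x y * q y)
    (μ : V → ℝ) (hμ0 : ∀ x ∈ A, 0 ≤ μ x) (hμ1 : ∑ x ∈ A, μ x = 1)
    (θb : V → ℝ)
    (hbal : ∀ x, q x < 1 →
      θb x = (if x ∈ A then μ x else 0)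
        + ∑ y ∈ Finset.univ.filter (fun y => q y < 1), θb y * pbar p q A y (some x)) :
    ∑ x ∈ A, θb x * (∑ z, p x z * q z) = 1 := by
  set S : Finset V := Finset.univ.filter (fun y => q y < 1) with hS
  have hAS : A ⊆ S := by
    intro x hx
    simp [hS, hqA x hx]
  -- row sums of pbar over S
  have hrow : ∀ y ∈ S, ∑ x ∈ S, pbar p q A y (some x) = 1 - pbar p q A y none := by
    intro y hy
    have hqy : q y < 1 := by simpa [hS] using hy
    have hfull : ∑ x ∈ S, p y x * (1 - q x) = ∑ x, p y x * (1 - q x) := by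
      rw [← Finset.sum_subset (Finset.subset_univ S)]
      intro x _ hx
      have hxS : ¬ q x < 1 := fun h => hx (by simp [hS, h])
      have : q x = 1 := le_antisymm (hq1 x) (not_lt.mp hxS)
      simp [this]
    have hsum : ∑ x, p y x * (1 - q x) = 1 - ∑ z, p y z * q z := by
      simp [mul_sub, Finset.sum_sub_distrib, hp1 y]
    have hS1 : ∑ x ∈ S, pbar p q A y (some x)
        = (1 - ∑ z, p y z * q z) / (1 - q y) := by
      simp only [pbar]
      rw [← Finset.sum_div, hfull, hsum]
    by_cases hyA : y ∈ A
    · rw [hS1, hqA y hyA]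
      simp [pbar, hyA]
    · have hyB : y ∉ B := fun hB' => absurd (hqB y hB') (by linarith)
      have : q y = ∑ z, p y z * q z := hqE y (by simp [hyA, hyB])
      rw [hS1, ← this, div_self (by linarith)]
      simp [pbar, hyA]
  -- sum the balance equation over S
  have hsumbal : ∑ x ∈ S, θb x
      = 1 + ∑ y ∈ S, θb y * (1 - pbar p q A y none) := by
    have : ∑ x ∈ S, θb x
        = ∑ x ∈ S, ((if x ∈ A then μ x else 0)
          + ∑ y ∈ S, θb y * pbar p q A y (some x)) := by
      apply Finset.sum_congr rfl
      intro x hx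
      exact hbal x (by simpa [hS] using hx)
    rw [this, Finset.sum_add_distrib]
    congr 1
    · rw [← Finset.sum_filter, Finset.filter_mem_eq_inter,
        Finset.inter_eq_right.mpr hAS] at *
      · exact hμ1
    · rw [Finset.sum_comm]
      apply Finset.sum_congr rfl
      intro y hy
      rw [← Finset.mul_sum, hrow y hy]
  have hkey : ∑ y ∈ S, θb y * pbar p q A y none = 1 := by
    have := hsumbal
    simp only [mul_sub, mul_one, Finset.sum_sub_distrib] at this
    linarith
  rw [← hkey, ← Finset.sum_subset hAS]
  · apply Finset.sum_congr rfl
    intro x hx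
    simp [pbar, hx]
  · intro x _ hx
    simp [pbar, hx]
end

section
/- Define the nonreactive probability flux J̄(x→y) = θ̄(x) p̄(y|x) for x, y ∈ V⁻. If q satisfies the committor system, μ is a probability distribution on A, and θ̄ satisfies the nonreactive balance equation, then: (i) Σ_{x∈V⁻} J̄(x→y) = θ̄(y) − μ(y)·1_A(y) for every y ∈ V⁻; and (ii) Σ_{y∈V⁻} J̄(x→y) = θ̄(x)·(1 − 1_A(x)·Σ_{z∈V} p(z|x) q(z)) for every x ∈ V⁻. -/
open Classical

-- The nonreactive probability flux `J̄(x→y) = θ̄(x) p̄(y|x)` for `x, y ∈ V⁻`.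
noncomputable def Jbar {V : Type*} [Fintype V] [DecidableEq V]
    (p : V → V → ℝ) (q : V → ℝ) (A : Finset V) (θb : V → ℝ) (x y : V) : ℝ :=
  θb x * pbar p q A x (some y)

/-- Define the nonreactive probability flux `J̄(x→y) = θ̄(x) p̄(y|x)` for
`x, y ∈ V⁻ = {q < 1}`.  If `q` satisfies the committor system, `μ` is a probability
distribution on `A`, and `θ̄` satisfies the nonreactive balance equation, then
(i) `Σ_{x∈V⁻} J̄(x→y) = θ̄(y) − μ(y)·1_A(y)` for every `y ∈ V⁻`, and
(ii) `Σ_{y∈V⁻} J̄(x→y) = θ̄(x)·(1 − 1_A(x)·Σ_{z∈V} p(z|x) q(z))` for every `x ∈ V⁻`. -/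
theorem Jbar_in_out_flux {V : Type*} [Fintype V] [DecidableEq V]
    (p : V → V → ℝ) (q : V → ℝ) (A B : Finset V)
    (hAB : Disjoint A B) (hA : A.Nonempty) (hB : B.Nonempty)
    (hp0 : ∀ x y, 0 ≤ p x y) (hp1 : ∀ x, ∑ y, p x y = 1)
    (hq0 : ∀ x, 0 ≤ q x) (hq1 : ∀ x, q x ≤ 1)
    (hqA : ∀ x ∈ A, q x = 0) (hqB : ∀ x ∈ B, q x = 1)
    (hqE : ∀ x, x ∉ A ∪ B → q x = ∑ y, p x y * q y)
    (μ : V → ℝ) (hμ0 : ∀ x ∈ A, 0 ≤ μ x) (hμ1 : ∑ x ∈ A, μ x = 1)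
    (θb : V → ℝ)
    (hbal : ∀ x, q x < 1 →
      θb x = (if x ∈ A then μ x else 0)
        + ∑ y ∈ Finset.univ.filter (fun y => q y < 1), θb y * pbar p q A y (some x)) :
    (∀ y, q y < 1 →
      ∑ x ∈ Finset.univ.filter (fun x => q x < 1), Jbar p q A θb x y
        = θb y - (if y ∈ A then μ y else 0)) ∧
    (∀ x, q x < 1 →
      ∑ y ∈ Finset.univ.filter (fun y => q y < 1), Jbar p q A θb x y
        = θb x * (1 - (if x ∈ A then (∑ z, p x z * q z) else 0))) := by
  constructor
  · intro y hy
    have := hbal y hy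
    simp only [Jbar]
    linarith
  · intro x hx
    have hxne : (1 : ℝ) - q x ≠ 0 := by linarith
    have key : ∑ y ∈ Finset.univ.filter (fun y => q y < 1), pbar p q A x (some y)
        = 1 - (if x ∈ A then (∑ z, p x z * q z) else 0) := by
      have hall : ∑ y ∈ Finset.univ.filter (fun y => q y < 1), p x y * (1 - q y)
          = ∑ y, p x y * (1 - q y) := by
        rw [Finset.sum_filter]
        apply Finset.sum_congr rfl
        intro y _
        by_cases h : q y < 1
        · simp [h]
        · have : q y = 1 := le_antisymm (hq1 y) (le_of_not_gt h)
          simp [h, this]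
      have hsum : ∑ y, p x y * (1 - q y) = 1 - ∑ z, p x z * q z := by
        simp [mul_sub, Finset.sum_sub_distrib, hp1 x]
      simp only [pbar]
      rw [← Finset.sum_div, hall, hsum]
      by_cases hxA : x ∈ A
      · rw [hqA x hxA]; simp [hxA]
      · have hxB : x ∉ B := fun h => absurd (hqB x h) (by linarith)
        have := hqE x (by simp [hxA, hxB])
        rw [← this]
        field_simp
        simp [hxA]
    simp only [Jbar, ← Finset.mul_sum, key]
end

section
/- If q satisfies the committor system, then p̃ is a stochastic matrix on V⁺ ∪ B: for every y ∈ V⁺ ∪ B one has p̃(x|y) ≥ 0 for all x ∈ V⁺ ∪ B and Σ_{x∈V⁺∪B} p̃(x|y) = 1; moreover p̃(x|y) = 0 whenever x ∈ A and y ∈ V⁺. -/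
open Classical

-- `V⁺ = {x ∈ Bᶜ : Σ_{z∈V} p(z|x) q(z) > 0}`; here `p x z` is the probability `p(z|x)` of
-- jumping from `x` to `z`.
noncomputable def Vplus {V : Type*} [Fintype V]
    (p : V → V → ℝ) (q : V → ℝ) (B : Finset V) : Finset V :=
  Finset.univ.filter fun x => x ∉ B ∧ 0 < ∑ z, p x z * q z

-- `ptilde p q A B y x` is the transition probability `p̃(x|y)` of the reactive chain on
-- `V⁺ ∪ B`.
noncomputable def ptilde {V : Type*} [Fintype V] [DecidableEq V]
    (p : V → V → ℝ) (q : V → ℝ) (A B : Finset V) (y x : V) : ℝ :=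
  if y ∈ B then (if x = y then 1 else 0)
  else if y ∈ A then p y x * q x / ∑ z, p y z * q z
  else p y x * q x / q y

/-- If `q` satisfies the committor system, then `p̃` is a stochastic matrix
on `V⁺ ∪ B`: for every `y ∈ V⁺ ∪ B` one has `p̃(x|y) ≥ 0` for all `x ∈ V⁺ ∪ B` and
`Σ_{x∈V⁺∪B} p̃(x|y) = 1`; moreover `p̃(x|y) = 0` whenever `x ∈ A` and `y ∈ V⁺`. -/
theorem ptilde_isStochastic {V : Type*} [Fintype V] [DecidableEq V]
    (p : V → V → ℝ) (q : V → ℝ) (A B : Finset V)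
    (hAB : Disjoint A B) (hA : A.Nonempty) (hB : B.Nonempty)
    (hp0 : ∀ x y, 0 ≤ p x y) (hp1 : ∀ x, ∑ y, p x y = 1)
    (hq0 : ∀ x, 0 ≤ q x) (hq1 : ∀ x, q x ≤ 1)
    (hqA : ∀ x ∈ A, q x = 0) (hqB : ∀ x ∈ B, q x = 1)
    (hqE : ∀ x, x ∉ A ∪ B → q x = ∑ y, p x y * q y) :
    (∀ y ∈ Vplus p q B ∪ B,
      (∀ x ∈ Vplus p q B ∪ B, 0 ≤ ptilde p q A B y x) ∧
      ∑ x ∈ Vplus p q B ∪ B, ptilde p q A B y x = 1) ∧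
    (∀ x ∈ A, ∀ y ∈ Vplus p q B, ptilde p q A B y x = 0) := by
  have hkey : ∀ x, x ∉ Vplus p q B ∪ B → q x = 0 := by
    intro x hx
    simp only [Finset.mem_union, Vplus, Finset.mem_filter, Finset.mem_univ, true_and,
      not_or, not_and, not_lt] at hx
    by_cases hxA : x ∈ A
    · exact hqA x hxA
    · have hxB : x ∉ B := hx.2
      have h1 := hqE x (by simp [hxA, hxB])
      have h2 := hx.1 hxB
      linarith [hq0 x]
  have hsum : ∀ y, ∑ x ∈ Vplus p q B ∪ B, p y x * q x = ∑ x, p y x * q x := by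
    intro y
    refine Finset.sum_subset (Finset.subset_univ _) ?_
    intro x _ hx
    rw [hkey x hx]; ring
  constructor
  · intro y hy
    by_cases hyB : y ∈ B
    · refine ⟨fun x _ => ?_, ?_⟩
      · unfold ptilde; rw [if_pos hyB]; split_ifs <;> norm_num
      · have : ∀ x ∈ Vplus p q B ∪ B, ptilde p q A B y x = if x = y then 1 else 0 := by
          intro x _; unfold ptilde; rw [if_pos hyB]
        rw [Finset.sum_congr rfl this, Finset.sum_ite_eq' (Vplus p q B ∪ B) y (fun _ => (1:ℝ)),
          if_pos (Finset.mem_union_right _ hyB)]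
    · have hyV : y ∈ Vplus p q B := by
        rcases Finset.mem_union.mp hy with h | h
        · exact h
        · exact absurd h hyB
      have hS : 0 < ∑ z, p y z * q z := by
        simp only [Vplus, Finset.mem_filter] at hyV; exact hyV.2.2
      by_cases hyA : y ∈ A
      · refine ⟨fun x _ => ?_, ?_⟩
        · unfold ptilde; rw [if_neg hyB, if_pos hyA]
          exact div_nonneg (mul_nonneg (hp0 y x) (hq0 x)) hS.le
        · have : ∀ x ∈ Vplus p q B ∪ B,
              ptilde p q A B y x = p y x * q x / ∑ z, p y z * q z := by
            intro x _; unfold ptilde; rw [if_neg hyB, if_pos hyA]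
          rw [Finset.sum_congr rfl this, ← Finset.sum_div, hsum, div_self hS.ne']
      · have hqy : q y = ∑ z, p y z * q z := hqE y (by simp [hyA, hyB])
        have hqy' : 0 < q y := hqy ▸ hS
        refine ⟨fun x _ => ?_, ?_⟩
        · unfold ptilde; rw [if_neg hyB, if_neg hyA]
          exact div_nonneg (mul_nonneg (hp0 y x) (hq0 x)) hqy'.le
        · have : ∀ x ∈ Vplus p q B ∪ B,
              ptilde p q A B y x = p y x * q x / q y := by
            intro x _; unfold ptilde; rw [if_neg hyB, if_neg hyA]
          rw [Finset.sum_congr rfl this, ← Finset.sum_div, hsum, ← hqy, div_self hqy'.ne']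
  · intro x hxA y hyV
    have hyB : y ∉ B := by
      simp only [Vplus, Finset.mem_filter] at hyV; exact hyV.2.1
    unfold ptilde
    rw [if_neg hyB]
    split_ifs <;> simp [hqA x hxA]
end

section
/- If q satisfies the committor system and θ̃ satisfies the reactive balance equation with initial distribution μ_r, then Σ_{x∈B} θ̃(x) = 1. -/
open Classical

/-- If `q` satisfies the committor system and `θ̃ : V⁺ ∪ B → ℝ` satisfies
the reactive balance equation with initial distribution `μ_r` on `A` (in particular
`A ⊆ V⁺`, as required for `θ̃` to be defined on `A`), then `Σ_{x∈B} θ̃(x) = 1`. -/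
theorem thetaTilde_sum_over_B_eq_one {V : Type*} [Fintype V] [DecidableEq V]
    (p : V → V → ℝ) (q : V → ℝ) (A B : Finset V)
    (hAB : Disjoint A B) (hA : A.Nonempty) (hB : B.Nonempty)
    (hp0 : ∀ x y, 0 ≤ p x y) (hp1 : ∀ x, ∑ y, p x y = 1)
    (hq0 : ∀ x, 0 ≤ q x) (hq1 : ∀ x, q x ≤ 1)
    (hqA : ∀ x ∈ A, q x = 0) (hqB : ∀ x ∈ B, q x = 1)
    (hqE : ∀ x, x ∉ A ∪ B → q x = ∑ y, p x y * q y)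
    (hAV : ∀ x ∈ A, x ∈ Vplus p q B)
    (μr : V → ℝ) (hμr0 : ∀ x ∈ A, 0 ≤ μr x) (hμr1 : ∑ x ∈ A, μr x = 1)
    (θt : V → ℝ)
    (hθA : ∀ x ∈ A, θt x = μr x)
    (hbal : ∀ x ∈ Vplus p q B ∪ B, x ∉ A →
      θt x = ∑ y ∈ Vplus p q B, θt y * ptilde p q A B y x) :
    ∑ x ∈ B, θt x = 1 := by
  classical
  set Vp := Vplus p q B with hVp
  have hVpB : ∀ x ∈ Vp, x ∉ B := by
    intro x hx
    simp only [hVp, Vplus, Finset.mem_filter] at hx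
    exact hx.2.1
  have hq0' : ∀ x, x ∉ Vp → x ∉ B → q x = 0 := by
    intro x hxV hxB
    by_cases hxA : x ∈ A
    · exact hqA x hxA
    · have hx : x ∉ A ∪ B := by simp [hxA, hxB]
      have h1 : q x = ∑ y, p x y * q y := hqE x hx
      have h2 : 0 ≤ ∑ y, p x y * q y :=
        Finset.sum_nonneg fun y _ => mul_nonneg (hp0 x y) (hq0 y)
      have h3 : ¬ (0 < ∑ z, p x z * q z) := by
        intro h
        exact hxV (by simp [hVp, Vplus, hxB, h])
      have h4 : ∑ y, p x y * q y = 0 := le_antisymm (not_lt.mp h3) h2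
      rw [h1, h4]
  have hsum1 : ∀ y ∈ Vp, ∑ x ∈ (Vp ∪ B) \ A, ptilde p q A B y x = 1 := by
    intro y hy
    have hyB : y ∉ B := hVpB y hy
    have hSy : 0 < ∑ z, p y z * q z := by
      simp only [hVp, Vplus, Finset.mem_filter] at hy
      exact hy.2.2
    have hform : ∀ x, ptilde p q A B y x = p y x * q x / (∑ z, p y z * q z) := by
      intro x
      by_cases hyA : y ∈ A
      · simp [ptilde, hyB, hyA]
      · have hy' : y ∉ A ∪ B := by simp [hyA, hyB]
        simp only [ptilde, hyB, hyA, if_false]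
        rw [hqE y hy']
    have hzero : ∀ x ∈ Finset.univ, x ∉ (Vp ∪ B) \ A → ptilde p q A B y x = 0 := by
      intro x _ hx
      rw [Finset.mem_sdiff, Finset.mem_union] at hx
      push_neg at hx
      have hqx : q x = 0 := by
        by_cases hxU : x ∈ Vp ∪ B
        · exact hqA x (hx (Finset.mem_union.mp hxU))
        · rw [Finset.mem_union] at hxU
          push_neg at hxU
          exact hq0' x hxU.1 hxU.2
      rw [hform x, hqx, mul_zero, zero_div]
    rw [Finset.sum_subset (Finset.subset_univ _) hzero,
        Finset.sum_congr rfl (fun x _ => hform x), ← Finset.sum_div,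
        div_self hSy.ne']
  have hstep : ∑ x ∈ (Vp ∪ B) \ A, θt x = ∑ y ∈ Vp, θt y := by
    have h1 : ∑ x ∈ (Vp ∪ B) \ A, θt x
        = ∑ x ∈ (Vp ∪ B) \ A, ∑ y ∈ Vp, θt y * ptilde p q A B y x := by
      refine Finset.sum_congr rfl fun x hx => ?_
      rw [Finset.mem_sdiff] at hx
      exact hbal x hx.1 hx.2
    rw [h1, Finset.sum_comm]
    refine Finset.sum_congr rfl fun y hy => ?_
    rw [← Finset.mul_sum, hsum1 y hy, mul_one]
  have hAVp : A ⊆ Vp := fun x hx => hAV x hx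
  have hAunion : A ⊆ Vp ∪ B := hAVp.trans Finset.subset_union_left
  have hdisj : Disjoint Vp B := by
    rw [Finset.disjoint_left]
    exact fun x hx => hVpB x hx
  have hsumA : ∑ x ∈ A, θt x = 1 := by
    rw [Finset.sum_congr rfl (fun x hx => hθA x hx), hμr1]
  have e1 : ∑ x ∈ (Vp ∪ B) \ A, θt x + ∑ x ∈ A, θt x = ∑ x ∈ Vp ∪ B, θt x :=
    Finset.sum_sdiff hAunion
  have e2 : ∑ x ∈ Vp ∪ B, θt x = ∑ x ∈ Vp, θt x + ∑ x ∈ B, θt x :=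
    Finset.sum_union hdisj
  rw [hstep, hsumA, e2] at e1
  linarith
end

section
/- Define the reactive probability flux J̃(x→y) = θ̃(x) p̃(y|x) for x ∈ V⁺ and y ∈ V⁺ ∪ B. If q satisfies the committor system and θ̃ satisfies the reactive balance equation with initial distribution μ_r, then: (i) Σ_{y∈V⁺∪B} J̃(x→y) = θ̃(x) for every x ∈ V⁺; (ii) Σ_{x∈V⁺} J̃(x→y) = θ̃(y) for every y ∈ (V⁺∪B) ∩ Aᶜ; and (iii) Σ_{x∈A} Σ_{y∈V⁺∪B} J̃(x→y) = Σ_{x∈V⁺} Σ_{y∈B} J̃(x→y) = 1. -/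
open Classical

-- The reactive probability flux `J̃(x→y) = θ̃(x) p̃(y|x)` for `x ∈ V⁺`, `y ∈ V⁺ ∪ B`.
noncomputable def Jtilde {V : Type*} [Fintype V] [DecidableEq V]
    (p : V → V → ℝ) (q : V → ℝ) (A B : Finset V) (θt : V → ℝ) (x y : V) : ℝ :=
  θt x * ptilde p q A B x y

/-!
Rows: for `x ∈ V⁺` the weights `p(y|x) q(y)` sum to the normaliser of `p̃(·|x)` (for `x ∉ A`
this is the harmonicity of `q`), and they vanish off `V⁺ ∪ B`, where `q = 0`; so `p̃(·|x)` is
a probability on `V⁺ ∪ B`. Columns: the balance equation is (ii) verbatim, and no flux enters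
`A` because `q = 0` there. Summing (i) over `V⁺` and subtracting the column sums leaves exactly
the mass `Σ_A θ̃ = Σ_A μ_r = 1` of the sources as the flux into `B`.
-/

open Finset

theorem Finset.sum_sum_out_eq_sum_source {ι β : Type*} [DecidableEq ι] [AddCommGroup β]
    {S T A : Finset ι} (hST : Disjoint S T) (hAS : A ⊆ S) (J : ι → ι → β) (θ : ι → β)
    (hrow : ∀ x ∈ S, ∑ y ∈ S ∪ T, J x y = θ x)
    (hcol : ∀ y ∈ S, y ∉ A → ∑ x ∈ S, J x y = θ y)
    (hsrc : ∀ y ∈ A, ∑ x ∈ S, J x y = 0) :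
    ∑ x ∈ S, ∑ y ∈ T, J x y = ∑ x ∈ A, θ x := by
  have hinner : ∑ x ∈ S, ∑ y ∈ S, J x y = ∑ y ∈ S \ A, θ y := by
    rw [sum_comm, ← sum_sdiff hAS, sum_eq_zero hsrc, add_zero]
    exact sum_congr rfl fun y hy => hcol y (mem_sdiff.1 hy).1 (mem_sdiff.1 hy).2
  calc ∑ x ∈ S, ∑ y ∈ T, J x y
      = ∑ x ∈ S, ∑ y ∈ S ∪ T, J x y - ∑ x ∈ S, ∑ y ∈ S, J x y := by
        simp only [sum_union hST, sum_add_distrib, add_sub_cancel_left]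
    _ = ∑ x ∈ A, θ x := by
        rw [sum_congr rfl hrow, hinner, ← sum_sdiff hAS, add_sub_cancel_left]

theorem mem_Vplus {V : Type*} [Fintype V] {p : V → V → ℝ} {q : V → ℝ} {B : Finset V} {x : V} :
    x ∈ Vplus p q B ↔ x ∉ B ∧ 0 < ∑ z, p x z * q z := by
  simp [Vplus]

section Reactive

variable {V : Type*} [Fintype V] [DecidableEq V] {p : V → V → ℝ} {q : V → ℝ} {A B : Finset V}

theorem ptilde_eq_zero_of_q_eq_zero {x y : V} (hx : x ∉ B) (hy : q y = 0) :
    ptilde p q A B x y = 0 := by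
  by_cases hxA : x ∈ A <;> simp [ptilde, hx, hxA, hy]

theorem q_eq_zero_of_notMem_Vplus_union (hp0 : ∀ x y, 0 ≤ p x y) (hq0 : ∀ x, 0 ≤ q x)
    (hqA : ∀ x ∈ A, q x = 0) (hqE : ∀ x, x ∉ A ∪ B → q x = ∑ y, p x y * q y) {y : V}
    (hy : y ∉ Vplus p q B ∪ B) : q y = 0 := by
  obtain ⟨hyV, hyB⟩ := notMem_union.1 hy
  by_cases hyA : y ∈ A
  · exact hqA y hyA
  have hle : ∑ z, p y z * q z ≤ 0 := not_lt.1 fun h => hyV (mem_Vplus.2 ⟨hyB, h⟩)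
  have hge : 0 ≤ ∑ z, p y z * q z := sum_nonneg fun z _ => mul_nonneg (hp0 y z) (hq0 z)
  rw [hqE y (notMem_union.2 ⟨hyA, hyB⟩)]
  exact le_antisymm hle hge

theorem sum_ptilde_eq_one (hqE : ∀ x, x ∉ A ∪ B → q x = ∑ y, p x y * q y) {x : V}
    (hx : x ∈ Vplus p q B) : ∑ y, ptilde p q A B x y = 1 := by
  obtain ⟨hxB, hpos⟩ := mem_Vplus.1 hx
  by_cases hxA : x ∈ A
  · simp only [ptilde, if_neg hxB, if_pos hxA, ← sum_div]
    exact div_self hpos.ne'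
  · have hqx := hqE x (notMem_union.2 ⟨hxA, hxB⟩)
    simp only [ptilde, if_neg hxB, if_neg hxA, ← sum_div, ← hqx]
    exact div_self (hqx ▸ hpos).ne'

theorem sum_ptilde_Vplus_union_eq_one (hp0 : ∀ x y, 0 ≤ p x y) (hq0 : ∀ x, 0 ≤ q x)
    (hqA : ∀ x ∈ A, q x = 0) (hqE : ∀ x, x ∉ A ∪ B → q x = ∑ y, p x y * q y) {x : V}
    (hx : x ∈ Vplus p q B) : ∑ y ∈ Vplus p q B ∪ B, ptilde p q A B x y = 1 := by
  rw [sum_subset (subset_univ _) fun y _ hy => ptilde_eq_zero_of_q_eq_zero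
    (mem_Vplus.1 hx).1 (q_eq_zero_of_notMem_Vplus_union hp0 hq0 hqA hqE hy)]
  exact sum_ptilde_eq_one hqE hx

end Reactive

theorem Jtilde_flux_identities_general {V : Type*} [Fintype V] [DecidableEq V]
    (p : V → V → ℝ) (q : V → ℝ) (A B : Finset V)
    (hp0 : ∀ x y, 0 ≤ p x y)
    (hq0 : ∀ x, 0 ≤ q x)
    (hqA : ∀ x ∈ A, q x = 0)
    (hqE : ∀ x, x ∉ A ∪ B → q x = ∑ y, p x y * q y)
    (hAV : ∀ x ∈ A, x ∈ Vplus p q B)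
    (μr : V → ℝ) (hμr1 : ∑ x ∈ A, μr x = 1)
    (θt : V → ℝ)
    (hθA : ∀ x ∈ A, θt x = μr x)
    (hbal : ∀ x ∈ Vplus p q B ∪ B, x ∉ A →
      θt x = ∑ y ∈ Vplus p q B, θt y * ptilde p q A B y x) :
    (∀ x ∈ Vplus p q B, ∑ y ∈ Vplus p q B ∪ B, Jtilde p q A B θt x y = θt x) ∧
    (∀ y ∈ Vplus p q B ∪ B, y ∉ A →
      ∑ x ∈ Vplus p q B, Jtilde p q A B θt x y = θt y) ∧
    (∑ x ∈ A, ∑ y ∈ Vplus p q B ∪ B, Jtilde p q A B θt x y = 1 ∧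
      ∑ x ∈ Vplus p q B, ∑ y ∈ B, Jtilde p q A B θt x y = 1) := by
  have hrow : ∀ x ∈ Vplus p q B, ∑ y ∈ Vplus p q B ∪ B, Jtilde p q A B θt x y = θt x :=
    fun x hx => by
      simp only [Jtilde, ← mul_sum, sum_ptilde_Vplus_union_eq_one hp0 hq0 hqA hqE hx, mul_one]
  have hcol : ∀ y ∈ Vplus p q B ∪ B, y ∉ A →
      ∑ x ∈ Vplus p q B, Jtilde p q A B θt x y = θt y :=
    fun y hy hyA => (hbal y hy hyA).symm
  have hsrc : ∀ y ∈ A, ∑ x ∈ Vplus p q B, Jtilde p q A B θt x y = 0 := fun y hy =>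
    sum_eq_zero fun x hx =>
      mul_eq_zero_of_right _ (ptilde_eq_zero_of_q_eq_zero (mem_Vplus.1 hx).1 (hqA y hy))
  have hmass : ∑ x ∈ A, θt x = 1 := by rw [sum_congr rfl hθA, hμr1]
  have hdisj : Disjoint (Vplus p q B) B :=
    disjoint_left.2 fun x hx => (mem_Vplus.1 hx).1
  refine ⟨hrow, hcol, ?_, ?_⟩
  · rw [sum_congr rfl fun x hx => hrow x (hAV x hx), hmass]
  · rw [sum_sum_out_eq_sum_source hdisj hAV _ θt hrow
      (fun y hy => hcol y (mem_union_left B hy)) hsrc, hmass]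

/-- Define the reactive probability flux `J̃(x→y) = θ̃(x) p̃(y|x)` for
`x ∈ V⁺` and `y ∈ V⁺ ∪ B`.  If `q` satisfies the committor system and `θ̃` satisfies the
reactive balance equation with initial distribution `μ_r` (so in particular `A ⊆ V⁺`), then:
(i) `Σ_{y∈V⁺∪B} J̃(x→y) = θ̃(x)` for every `x ∈ V⁺`;
(ii) `Σ_{x∈V⁺} J̃(x→y) = θ̃(y)` for every `y ∈ (V⁺∪B) ∩ Aᶜ`;
(iii) `Σ_{x∈A} Σ_{y∈V⁺∪B} J̃(x→y) = Σ_{x∈V⁺} Σ_{y∈B} J̃(x→y) = 1`. -/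
theorem Jtilde_flux_identities {V : Type*} [Fintype V] [DecidableEq V]
    (p : V → V → ℝ) (q : V → ℝ) (A B : Finset V)
    (hAB : Disjoint A B) (hA : A.Nonempty) (hB : B.Nonempty)
    (hp0 : ∀ x y, 0 ≤ p x y) (hp1 : ∀ x, ∑ y, p x y = 1)
    (hq0 : ∀ x, 0 ≤ q x) (hq1 : ∀ x, q x ≤ 1)
    (hqA : ∀ x ∈ A, q x = 0) (hqB : ∀ x ∈ B, q x = 1)
    (hqE : ∀ x, x ∉ A ∪ B → q x = ∑ y, p x y * q y)
    (hAV : ∀ x ∈ A, x ∈ Vplus p q B)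
    (μr : V → ℝ) (hμr0 : ∀ x ∈ A, 0 ≤ μr x) (hμr1 : ∑ x ∈ A, μr x = 1)
    (θt : V → ℝ)
    (hθA : ∀ x ∈ A, θt x = μr x)
    (hbal : ∀ x ∈ Vplus p q B ∪ B, x ∉ A →
      θt x = ∑ y ∈ Vplus p q B, θt y * ptilde p q A B y x) :
    (∀ x ∈ Vplus p q B, ∑ y ∈ Vplus p q B ∪ B, Jtilde p q A B θt x y = θt x) ∧
    (∀ y ∈ Vplus p q B ∪ B, y ∉ A →
      ∑ x ∈ Vplus p q B, Jtilde p q A B θt x y = θt y) ∧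
    (∑ x ∈ A, ∑ y ∈ Vplus p q B ∪ B, Jtilde p q A B θt x y = 1 ∧
      ∑ x ∈ Vplus p q B, ∑ y ∈ B, Jtilde p q A B θt x y = 1) :=
  Jtilde_flux_identities_general p q A B hp0 hq0 hqA hqE hAV μr hμr1 θt hθA hbal
end

section
/- If θ satisfies the first-passage balance equation with initial distribution μ, and f : V → ℝ satisfies the mean-first-passage-time system Σ_{y∈V} p(y|x) f(y) − f(x) = −1 for every x ∈ Bᶜ and f = 0 on B, then Σ_{x∈A} μ(x) f(x) = Σ_{x∈Bᶜ} θ(x). -/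
open Classical

/-- If `θ` satisfies the first-passage balance equation
`θ(x) = μ(x)·1_A(x) + Σ_{y∈Bᶜ} θ(y) p(x|y)` with initial distribution `μ` (a probability
distribution on `A`), and `f : V → ℝ` satisfies the mean-first-passage-time system
`Σ_{y∈V} p(y|x) f(y) − f(x) = −1` for every `x ∈ Bᶜ` and `f = 0` on `B`, then
`Σ_{x∈A} μ(x) f(x) = Σ_{x∈Bᶜ} θ(x)`.  (Here `p x y` is the probability `p(y|x)` of jumping
from `x` to `y`.) -/
theorem mean_first_passage_length_eq_sum_theta {V : Type*} [Fintype V] [DecidableEq V]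
    (p : V → V → ℝ) (A B : Finset V)
    (hAB : Disjoint A B) (hA : A.Nonempty) (hB : B.Nonempty)
    (hp0 : ∀ x y, 0 ≤ p x y) (hp1 : ∀ x, ∑ y, p x y = 1)
    (μ : V → ℝ) (hμ0 : ∀ x ∈ A, 0 ≤ μ x) (hμ1 : ∑ x ∈ A, μ x = 1)
    (θ : V → ℝ)
    (hθ : ∀ x, θ x = (if x ∈ A then μ x else 0) + ∑ y ∈ Bᶜ, θ y * p y x)
    (f : V → ℝ)
    (hf : ∀ x ∉ B, (∑ y, p x y * f y) - f x = -1)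
    (hfB : ∀ x ∈ B, f x = 0) :
    ∑ x ∈ A, μ x * f x = ∑ x ∈ Bᶜ, θ x := by
  have key : ∑ x, θ x * f x
      = ∑ x ∈ A, μ x * f x + ∑ y ∈ Bᶜ, θ y * (f y - 1) := by
    calc ∑ x, θ x * f x
        = ∑ x, ((if x ∈ A then μ x else 0) + ∑ y ∈ Bᶜ, θ y * p y x) * f x := by
          simp_rw [← hθ]
      _ = ∑ x, ((if x ∈ A then μ x * f x else 0) + ∑ y ∈ Bᶜ, θ y * (p y x * f x)) := by
          apply Finset.sum_congr rfl
          intro x _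
          rw [add_mul, Finset.sum_mul]
          congr 1
          · split <;> simp
          · exact Finset.sum_congr rfl fun y _ => mul_assoc _ _ _
      _ = (∑ x ∈ A, μ x * f x) + ∑ x, ∑ y ∈ Bᶜ, θ y * (p y x * f x) := by
          rw [Finset.sum_add_distrib, Finset.sum_ite_mem, Finset.univ_inter]
      _ = (∑ x ∈ A, μ x * f x) + ∑ y ∈ Bᶜ, θ y * (f y - 1) := by
          congr 1
          rw [Finset.sum_comm]
          apply Finset.sum_congr rfl
          intro y hy
          rw [← Finset.mul_sum]
          congr 1
          have := hf y (Finset.mem_compl.mp hy)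
          linarith
  have split : ∑ x, θ x * f x = ∑ x ∈ Bᶜ, θ x * f x := by
    rw [← Finset.sum_compl_add_sum B (fun x => θ x * f x)]
    have : ∑ x ∈ B, θ x * f x = 0 :=
      Finset.sum_eq_zero fun x hx => by rw [hfB x hx, mul_zero]
    rw [this, add_zero]
  have expand : ∑ y ∈ Bᶜ, θ y * (f y - 1) = (∑ y ∈ Bᶜ, θ y * f y) - ∑ y ∈ Bᶜ, θ y := by
    rw [← Finset.sum_sub_distrib]
    exact Finset.sum_congr rfl fun y _ => by ring
  rw [split, expand] at key
  linarith
end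

section
/- If q satisfies the committor system and θ satisfies the first-passage balance equation with initial distribution μ, then the function θ̄ : V⁻ → ℝ defined by θ̄(x) = θ(x)(1 − q(x)) satisfies the nonreactive balance equation θ̄(x) = μ(x)·1_A(x) + Σ_{y∈V⁻} θ̄(y) p̄(x|y) for every x ∈ V⁻. -/
open Classical

/-- If `q` satisfies the committor system and `θ` satisfies the
first-passage balance equation with initial distribution `μ`, then the function
`θ̄(x) = θ(x)(1 − q(x))` satisfies the nonreactive balance equation
`θ̄(x) = μ(x)·1_A(x) + Σ_{y∈V⁻} θ̄(y) p̄(x|y)` for every `x ∈ V⁻ = {q < 1}`. -/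
theorem thetaBar_satisfies_nonreactive_balance {V : Type*} [Fintype V] [DecidableEq V]
    (p : V → V → ℝ) (q : V → ℝ) (A B : Finset V)
    (hAB : Disjoint A B) (hA : A.Nonempty) (hB : B.Nonempty)
    (hp0 : ∀ x y, 0 ≤ p x y) (hp1 : ∀ x, ∑ y, p x y = 1)
    (hq0 : ∀ x, 0 ≤ q x) (hq1 : ∀ x, q x ≤ 1)
    (hqA : ∀ x ∈ A, q x = 0) (hqB : ∀ x ∈ B, q x = 1)
    (hqE : ∀ x, x ∉ A ∪ B → q x = ∑ y, p x y * q y)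
    (μ : V → ℝ) (hμ0 : ∀ x ∈ A, 0 ≤ μ x) (hμ1 : ∑ x ∈ A, μ x = 1)
    (θ : V → ℝ)
    (hθ : ∀ x, θ x = (if x ∈ A then μ x else 0) + ∑ y ∈ Bᶜ, θ y * p y x) :
    ∀ x, q x < 1 →
      θ x * (1 - q x)
        = (if x ∈ A then μ x else 0)
          + ∑ y ∈ Finset.univ.filter (fun y => q y < 1),
              (θ y * (1 - q y)) * pbar p q A y (some x) := by
  intro x hx
  -- key: if q y = 1 and y ∉ B then p y x = 0
  have key : ∀ y, q y = 1 → y ∉ B → p y x = 0 := by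
    intro y hy hyB
    have hyA : y ∉ A := fun h => by simp [hqA y h] at hy
    have hyAB : y ∉ A ∪ B := by simp [hyA, hyB]
    have hsum : ∑ z, p y z * (1 - q z) = 0 := by
      have := hqE y hyAB
      have h1 : ∑ z, p y z * (1 - q z) = (∑ z, p y z) - ∑ z, p y z * q z := by
        rw [← Finset.sum_sub_distrib]; congr 1; ext z; ring
      rw [h1, hp1, ← this, hy]; ring
    have hzero := (Finset.sum_eq_zero_iff_of_nonneg (fun z _ =>
      mul_nonneg (hp0 y z) (by linarith [hq1 z]))).mp hsum x (Finset.mem_univ x)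
    have : (1 : ℝ) - q x ≠ 0 := by linarith
    exact (mul_eq_zero.mp hzero).resolve_right this
  have hstep : ∀ y ∈ Finset.univ.filter (fun y => q y < 1),
      (θ y * (1 - q y)) * pbar p q A y (some x) = θ y * p y x * (1 - q x) := by
    intro y hy
    have hy' : q y < 1 := (Finset.mem_filter.mp hy).2
    have hne : (1 : ℝ) - q y ≠ 0 := by linarith
    show (θ y * (1 - q y)) * (p y x * (1 - q x) / (1 - q y)) = _
    field_simp
  rw [Finset.sum_congr rfl hstep]
  have hsub : Finset.univ.filter (fun y => q y < 1) ⊆ Bᶜ := by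
    intro y hy
    have hy' : q y < 1 := (Finset.mem_filter.mp hy).2
    simp only [Finset.mem_compl]
    intro hyB
    rw [hqB y hyB] at hy'
    exact lt_irrefl _ hy'
  have hext : ∑ y ∈ Finset.univ.filter (fun y => q y < 1), θ y * p y x * (1 - q x)
      = ∑ y ∈ Bᶜ, θ y * p y x * (1 - q x) := by
    apply Finset.sum_subset hsub
    intro y hyB hyf
    have hyB' : y ∉ B := Finset.mem_compl.mp hyB
    have : ¬ q y < 1 := by
      intro h
      exact hyf (Finset.mem_filter.mpr ⟨Finset.mem_univ y, h⟩)
    have hqy : q y = 1 := le_antisymm (hq1 y) (not_lt.mp this)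
    rw [key y hqy hyB']
    ring
  rw [hext, ← Finset.sum_mul]
  have hS : ∑ y ∈ Bᶜ, θ y * p y x = θ x - (if x ∈ A then μ x else 0) := by
    have := hθ x; linarith
  rw [hS]
  by_cases hxA : x ∈ A
  · simp only [hxA, if_true]
    rw [hqA x hxA]; ring
  · simp only [hxA, if_false]; ring
end

section
/- If q satisfies the committor system and θ satisfies the first-passage balance equation with initial distribution μ, define μ_r(x) = θ(x)·Σ_{z∈V} p(z|x) q(z) for x ∈ A and θ̃(x) = θ(x) q(x) + μ_r(x)·1_A(x) for x ∈ V. Then θ̃ satisfies the reactive balance equation: θ̃(x) = Σ_{y∈V⁺} θ̃(y) p̃(x|y) for every x ∈ Aᶜ. -/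
open Classical

/-- If `q` satisfies the committor system and `θ` satisfies the
first-passage balance equation with initial distribution `μ`, define
`μ_r(x) = θ(x)·Σ_{z∈V} p(z|x) q(z)` for `x ∈ A` and
`θ̃(x) = θ(x) q(x) + μ_r(x)·1_A(x)` for `x ∈ V`.  Then `θ̃` satisfies the reactive balance
equation `θ̃(x) = Σ_{y∈V⁺} θ̃(y) p̃(x|y)` for every `x ∈ Aᶜ`. -/
theorem thetaTilde_satisfies_reactive_balance {V : Type*} [Fintype V] [DecidableEq V]
    (p : V → V → ℝ) (q : V → ℝ) (A B : Finset V)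
    (hAB : Disjoint A B) (hA : A.Nonempty) (hB : B.Nonempty)
    (hp0 : ∀ x y, 0 ≤ p x y) (hp1 : ∀ x, ∑ y, p x y = 1)
    (hq0 : ∀ x, 0 ≤ q x) (hq1 : ∀ x, q x ≤ 1)
    (hqA : ∀ x ∈ A, q x = 0) (hqB : ∀ x ∈ B, q x = 1)
    (hqE : ∀ x, x ∉ A ∪ B → q x = ∑ y, p x y * q y)
    (μ : V → ℝ) (hμ0 : ∀ x ∈ A, 0 ≤ μ x) (hμ1 : ∑ x ∈ A, μ x = 1)
    (θ : V → ℝ)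
    (hθ : ∀ x, θ x = (if x ∈ A then μ x else 0) + ∑ y ∈ Bᶜ, θ y * p y x)
    (μr θt : V → ℝ)
    (hμr : ∀ x ∈ A, μr x = θ x * ∑ z, p x z * q z)
    (hθt : ∀ x, θt x = θ x * q x + (if x ∈ A then μr x else 0)) :
    ∀ x, x ∉ A → θt x = ∑ y ∈ Vplus p q B, θt y * ptilde p q A B y x := by
  intro x hx
  have key : ∀ y ∈ Vplus p q B, θt y * ptilde p q A B y x = θ y * (p y x * q x) := by
    intro y hy
    simp only [Vplus, Finset.mem_filter, Finset.mem_univ, true_and] at hy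
    obtain ⟨hyB, hyS⟩ := hy
    rw [ptilde, if_neg hyB]
    by_cases hyA : y ∈ A
    · rw [if_pos hyA, hθt y, if_pos hyA, hqA y hyA, hμr y hyA]
      field_simp
      ring
    · rw [if_neg hyA, hθt y, if_neg hyA]
      have hq : q y = ∑ z, p y z * q z := hqE y (by simp [hyA, hyB])
      have hqpos : 0 < q y := hq ▸ hyS
      field_simp
      ring
  rw [Finset.sum_congr rfl key]
  have hsub : Vplus p q B ⊆ Bᶜ := by
    intro y hy
    simp only [Vplus, Finset.mem_filter, Finset.mem_univ, true_and] at hy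
    simpa using hy.1
  rw [Finset.sum_subset hsub ?_]
  · have h1 : ∑ y ∈ Bᶜ, θ y * (p y x * q x) = (∑ y ∈ Bᶜ, θ y * p y x) * q x := by
      rw [Finset.sum_mul]; exact Finset.sum_congr rfl fun y _ => by ring
    have h2 := hθ x
    rw [if_neg hx, zero_add] at h2
    rw [h1, ← h2, hθt x, if_neg hx, add_zero]
  · intro y hyB hyV
    simp only [Vplus, Finset.mem_filter, Finset.mem_univ, true_and, not_and] at hyV
    have hyB' : y ∉ B := by simpa using hyB
    have hS0 : ∑ z, p y z * q z = 0 :=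
      le_antisymm (not_lt.1 (hyV hyB'))
        (Finset.sum_nonneg fun z _ => mul_nonneg (hp0 y z) (hq0 z))
    have hzero : p y x * q x = 0 :=
      (Finset.sum_eq_zero_iff_of_nonneg
        (fun z _ => mul_nonneg (hp0 y z) (hq0 z))).1 hS0 x (Finset.mem_univ x)
    rw [hzero, mul_zero]
end

section
/- Let q satisfy the committor system and let θ : V → ℝ be any function. Define θ̄(x) = θ(x)(1−q(x)), μ_r(x) = θ(x)·Σ_{z∈V} p(z|x) q(z) for x ∈ A, and θ̃(x) = θ(x) q(x) + μ_r(x)·1_A(x). Define the fluxes J(x→y) = θ(x) p(y|x) for x ∈ Bᶜ, J̄(x→y) = θ̄(x) p̄(y|x) for x, y ∈ V⁻ (and J̄(x→y) = 0 otherwise), and J̃(x→y) = θ̃(x) p̃(y|x) for x ∈ V⁺, y ∈ V⁺ ∪ B (and J̃(x→y) = 0 otherwise). Then the flux decomposition J(x→y) = J̄(x→y) + J̃(x→y) holds for every x ∈ Bᶜ and y ∈ V. -/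
open Classical

/-- Let `q` satisfy the committor system and let `θ : V → ℝ` be any
function.  Define `θ̄(x) = θ(x)(1−q(x))`, `μ_r(x) = θ(x)·Σ_{z∈V} p(z|x) q(z)` for `x ∈ A`,
and `θ̃(x) = θ(x) q(x) + μ_r(x)·1_A(x)`.  Define the fluxes `J(x→y) = θ(x) p(y|x)` for
`x ∈ Bᶜ`, `J̄(x→y) = θ̄(x) p̄(y|x)` for `x, y ∈ V⁻` (and `J̄(x→y) = 0` otherwise), and
`J̃(x→y) = θ̃(x) p̃(y|x)` for `x ∈ V⁺`, `y ∈ V⁺ ∪ B` (and `J̃(x→y) = 0` otherwise).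
Then the flux decomposition `J(x→y) = J̄(x→y) + J̃(x→y)` holds for every `x ∈ Bᶜ` and
`y ∈ V`. -/
theorem flux_decomposition {V : Type*} [Fintype V] [DecidableEq V]
    (p : V → V → ℝ) (q : V → ℝ) (A B : Finset V)
    (hAB : Disjoint A B) (hA : A.Nonempty) (hB : B.Nonempty)
    (hp0 : ∀ x y, 0 ≤ p x y) (hp1 : ∀ x, ∑ y, p x y = 1)
    (hq0 : ∀ x, 0 ≤ q x) (hq1 : ∀ x, q x ≤ 1)
    (hqA : ∀ x ∈ A, q x = 0) (hqB : ∀ x ∈ B, q x = 1)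
    (hqE : ∀ x, x ∉ A ∪ B → q x = ∑ y, p x y * q y)
    (θ θb μr θt : V → ℝ)
    (hθb : ∀ x, θb x = θ x * (1 - q x))
    (hμr : ∀ x ∈ A, μr x = θ x * ∑ z, p x z * q z)
    (hθt : ∀ x, θt x = θ x * q x + (if x ∈ A then μr x else 0))
    (J Jb Jt : V → V → ℝ)
    (hJ : ∀ x ∉ B, ∀ y, J x y = θ x * p x y)
    (hJb : ∀ x y, Jb x y =
      if q x < 1 ∧ q y < 1 then θb x * pbar p q A x (some y) else 0)
    (hJt : ∀ x y, Jt x y =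
      if x ∈ Vplus p q B ∧ y ∈ Vplus p q B ∪ B then θt x * ptilde p q A B x y else 0) :
    ∀ x ∉ B, ∀ y, J x y = Jb x y + Jt x y := by
  intro x hxB y
  rw [hJ x hxB y, hJb x y, hJt x y]
  have hyVp : ∀ w, w ∉ Vplus p q B ∪ B → q w = 0 := by
    intro w hw
    rw [Finset.mem_union] at hw
    push_neg at hw
    obtain ⟨hw1, hw2⟩ := hw
    have hge : 0 ≤ ∑ z, p w z * q z :=
      Finset.sum_nonneg fun z _ => mul_nonneg (hp0 w z) (hq0 z)
    have hS : ∑ z, p w z * q z = 0 := by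
      have hle : ¬ 0 < ∑ z, p w z * q z := by
        intro h
        exact hw1 (by simp [Vplus, hw2, h])
      linarith
    by_cases hwA : w ∈ A
    · exact hqA w hwA
    · rw [hqE w (by simp [Finset.mem_union, hwA, hw2])]; exact hS
  have hVp1 : ∀ w, q w = 1 → w ∈ Vplus p q B ∪ B := by
    intro w hw
    by_cases hwB : w ∈ B
    · exact Finset.mem_union_right _ hwB
    · have hwA : w ∉ A := fun h => by simp [hqA w h] at hw
      refine Finset.mem_union_left _ ?_
      simp only [Vplus, Finset.mem_filter, Finset.mem_univ, true_and]
      refine ⟨hwB, ?_⟩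
      rw [← hqE w (by simp [Finset.mem_union, hwA, hwB]), hw]; norm_num
  rcases lt_or_eq_of_le (hq1 x) with hxlt | hx1
  · -- q x < 1
    have hSge : 0 ≤ ∑ z, p x z * q z :=
      Finset.sum_nonneg fun z _ => mul_nonneg (hp0 x z) (hq0 z)
    have h1x : (1 : ℝ) - q x ≠ 0 := by
      intro h; apply absurd hxlt; push_neg; linarith
    rcases lt_or_eq_of_le hSge with hSpos | hS0
    · -- Sx > 0
      have hxVp : x ∈ Vplus p q B := by simp [Vplus, hxB, hSpos]
      have hSne : (∑ z, p x z * q z) ≠ 0 := ne_of_gt hSpos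
      have hxK : θt x * ptilde p q A B x y = θ x * (p x y * q y) := by
        by_cases hxA : x ∈ A
        · rw [hθt x, if_pos hxA, hμr x hxA, hqA x hxA]
          simp only [ptilde, if_neg hxB, if_pos hxA]
          field_simp
          ring
        · rw [hθt x, if_neg hxA]
          simp only [ptilde, if_neg hxB, if_neg hxA]
          have hqx : q x = ∑ z, p x z * q z :=
            hqE x (by simp [Finset.mem_union, hxA, hxB])
          have hqxne : q x ≠ 0 := by rw [hqx]; exact hSne
          field_simp
          ring
      rcases lt_or_eq_of_le (hq1 y) with hylt | hy1
      · rw [if_pos ⟨hxlt, hylt⟩, hθb x]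
        simp only [pbar]
        by_cases hy : y ∈ Vplus p q B ∪ B
        · rw [if_pos ⟨hxVp, hy⟩, hxK]
          field_simp
          ring
        · rw [if_neg (fun h => hy h.2)]
          have hqy : q y = 0 := hyVp y hy
          rw [hqy]
          field_simp
          ring
      · rw [if_neg (fun h => absurd hy1 (ne_of_lt h.2)),
            if_pos ⟨hxVp, hVp1 y hy1⟩, hxK, hy1]
        ring
    · -- Sx = 0
      have hS0' : ∑ z, p x z * q z = 0 := hS0.symm
      have hterm0 : ∀ z, p x z * q z = 0 := fun z =>
        (Finset.sum_eq_zero_iff_of_nonneg (fun w _ =>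
          mul_nonneg (hp0 x w) (hq0 w))).mp hS0' z (Finset.mem_univ z)
      have hxVp : x ∉ Vplus p q B := by simp [Vplus, hS0']
      rcases lt_or_eq_of_le (hq1 y) with hylt | hy1
      · rw [if_pos ⟨hxlt, hylt⟩, if_neg (fun h => hxVp h.1), hθb x]
        simp only [pbar]
        have key : p x y * (1 - q y) = p x y := by
          linear_combination (-1 : ℝ) * hterm0 y
        rw [key]
        field_simp
        ring
      · rw [if_neg (fun h => absurd hy1 (ne_of_lt h.2)),
            if_neg (fun h => hxVp h.1)]
        have hpy : p x y = 0 := by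
          have := hterm0 y; rw [hy1, mul_one] at this; exact this
        rw [hpy]; ring
  · -- q x = 1
    have hxA : x ∉ A := fun h => by simp [hqA x h] at hx1
    have hSx : ∑ z, p x z * q z = 1 := by
      rw [← hqE x (by simp [Finset.mem_union, hxA, hxB])]; exact hx1
    have hxVp : x ∈ Vplus p q B := by
      simp [Vplus, hxB, hSx]
    have hterm : ∀ z, p x z * q z = p x z := by
      have hsum : ∑ z, p x z * (1 - q z) = 0 := by
        have h1 : ∑ z, p x z * (1 - q z) = (∑ z, p x z) - ∑ z, p x z * q z := by
          rw [← Finset.sum_sub_distrib]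
          apply Finset.sum_congr rfl
          intros; ring
        rw [h1, hp1 x, hSx]; ring
      intro z
      have hz : p x z * (1 - q z) = 0 :=
        (Finset.sum_eq_zero_iff_of_nonneg (fun w _ =>
          mul_nonneg (hp0 x w) (by linarith [hq1 w]))).mp hsum z (Finset.mem_univ z)
      linear_combination (-1 : ℝ) * hz
    rw [if_neg (fun h => absurd hx1 (ne_of_lt h.1))]
    by_cases hy : y ∈ Vplus p q B ∪ B
    · rw [if_pos ⟨hxVp, hy⟩, hθt x, if_neg hxA]
      simp only [ptilde, if_neg hxB, if_neg hxA]
      rw [hx1, div_one, hterm y]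
      ring
    · rw [if_neg (fun h => hy h.2)]
      have hqy : q y = 0 := hyVp y hy
      have hpy : p x y = 0 := by
        have := hterm y; rw [hqy, mul_zero] at this; exact this.symm
      rw [hpy]; ring
end

section
/- Let m be a positive invariant probability distribution of p and let q⁻ satisfy the backward committor system. Then Σ_{x∈A} Σ_{y∈V} m(y)(1 − q⁻(y)) p(x|y) = Σ_{x∈B} Σ_{y∈V} m(y) q⁻(y) p(x|y). -/
open Classical

/-!
Weight the backward committor by the invariant measure: `μ = m q⁻`. Off `A ∪ B` the committor
equation for the reversed chain says exactly that `μ` is balanced there (the mass flowing into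
`x` in one step is `μ x`), and a stochastic matrix conserves total mass, so the inflow into
`A ∪ B` equals `μ (A ∪ B) = m A`. By invariance of `m`, the left-hand side is `m A` minus the
inflow of `μ` into `A`, which is therefore the inflow of `μ` into `B`.
-/

open Finset

section Flux

variable {V : Type*} [Fintype V] {p : V → V → ℝ}

theorem sum_sum_mul_eq_sum_of_stochastic (hp1 : ∀ x, ∑ y, p x y = 1) (μ : V → ℝ) :
    ∑ x, ∑ y, μ y * p y x = ∑ y, μ y := by
  rw [sum_comm]
  simp only [← mul_sum, hp1, mul_one]

theorem sum_inflow_eq_sum_of_balanced_off (hp1 : ∀ x, ∑ y, p x y = 1) (μ : V → ℝ)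
    (s : Finset V) (hbal : ∀ x ∉ s, ∑ y, μ y * p y x = μ x) :
    ∑ x ∈ s, ∑ y, μ y * p y x = ∑ x ∈ s, μ x := by
  have htotal := sum_sum_mul_eq_sum_of_stochastic hp1 μ
  rw [← sum_add_sum_compl s, ← sum_add_sum_compl s μ,
    sum_congr rfl fun x hx => hbal x (mem_compl.mp hx)] at htotal
  exact add_right_cancel htotal

theorem sum_mul_mul_eq_of_reversed_harmonic {m q : V → ℝ} {x : V} (hmx : m x ≠ 0)
    (hq : q x = ∑ y, (m y * p y x / m x) * q y) :
    ∑ y, m y * q y * p y x = m x * q x := by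
  rw [hq, mul_sum]
  refine sum_congr rfl fun y _ => ?_
  field_simp

end Flux

theorem Z_forward_backward_balance_general {V : Type*} [Fintype V] [DecidableEq V]
    (p : V → V → ℝ) (A B : Finset V)
    (hAB : Disjoint A B)
    (hp1 : ∀ x, ∑ y, p x y = 1)
    (m : V → ℝ) (hm0 : ∀ x, 0 < m x)
    (hminv : ∀ x, ∑ y, m y * p y x = m x)
    (qm : V → ℝ)
    (hqmA : ∀ x ∈ A, qm x = 1) (hqmB : ∀ x ∈ B, qm x = 0)
    (hqmE : ∀ x, x ∉ A ∪ B → qm x = ∑ y, (m y * p y x / m x) * qm y) :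
    ∑ x ∈ A, ∑ y, m y * (1 - qm y) * p y x = ∑ x ∈ B, ∑ y, m y * qm y * p y x := by
  have hconserved := sum_inflow_eq_sum_of_balanced_off hp1 (fun y => m y * qm y) (A ∪ B)
    fun x hx => sum_mul_mul_eq_of_reversed_harmonic (hm0 x).ne' (hqmE x hx)
  have hmassA : ∑ x ∈ A, m x * qm x = ∑ x ∈ A, m x :=
    sum_congr rfl fun x hx => by rw [hqmA x hx, mul_one]
  have hmassB : ∑ x ∈ B, m x * qm x = 0 :=
    sum_eq_zero fun x hx => by rw [hqmB x hx, mul_zero]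
  have hlhs : ∀ x, ∑ y, m y * (1 - qm y) * p y x = m x - ∑ y, m y * qm y * p y x := by
    intro x
    rw [← hminv x, ← sum_sub_distrib]
    exact sum_congr rfl fun y _ => by ring
  simp only [sum_union hAB, hmassA, hmassB] at hconserved
  simp only [hlhs, sum_sub_distrib]
  linarith

/-- Let `m` be a positive invariant probability distribution of `p` and
let `q⁻` satisfy the backward committor system (for the time-reversed matrix
`p⁻(y|x) = m(y) p(x|y) / m(x)`).  Then
`Σ_{x∈A} Σ_{y∈V} m(y)(1 − q⁻(y)) p(x|y) = Σ_{x∈B} Σ_{y∈V} m(y) q⁻(y) p(x|y)`.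
(Here `p y x` is the probability `p(x|y)` of jumping from `y` to `x`.) -/
theorem Z_forward_backward_balance {V : Type*} [Fintype V] [DecidableEq V]
    (p : V → V → ℝ) (A B : Finset V)
    (hAB : Disjoint A B) (hA : A.Nonempty) (hB : B.Nonempty)
    (hp0 : ∀ x y, 0 ≤ p x y) (hp1 : ∀ x, ∑ y, p x y = 1)
    (m : V → ℝ) (hm0 : ∀ x, 0 < m x) (hm1 : ∑ x, m x = 1)
    (hminv : ∀ x, ∑ y, m y * p y x = m x)
    (qm : V → ℝ)
    (hqm0 : ∀ x, 0 ≤ qm x) (hqm1 : ∀ x, qm x ≤ 1)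
    (hqmA : ∀ x ∈ A, qm x = 1) (hqmB : ∀ x ∈ B, qm x = 0)
    (hqmE : ∀ x, x ∉ A ∪ B → qm x = ∑ y, (m y * p y x / m x) * qm y) :
    ∑ x ∈ A, ∑ y, m y * (1 - qm y) * p y x = ∑ x ∈ B, ∑ y, m y * qm y * p y x :=
  Z_forward_backward_balance_general p A B hAB hp1 m hm0 hminv qm hqmA hqmB hqmE
end

section
/- Let m be a positive invariant probability distribution of p, let q satisfy the committor system, and let q⁻ satisfy the backward committor system. Then the following four quantities are all equal: Σ_{x∈A} Σ_{y∈V} m(y)(1 − q⁻(y)) p(x|y) = Σ_{x∈B} Σ_{y∈V} m(y) q⁻(y) p(x|y) = Σ_{x∈A} Σ_{y∈V} m(x) q(y) p(y|x) = Σ_{x∈B} Σ_{y∈V} m(x)(1 − q(y)) p(y|x). -/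
open Classical

/-- Let `m` be a positive invariant probability distribution of `p`, let
`q` satisfy the committor system, and let `q⁻` satisfy the backward committor system (for
the time-reversed matrix `p⁻(y|x) = m(y) p(x|y) / m(x)`).  Then the following four
quantities are all equal:
`Σ_{x∈A} Σ_{y∈V} m(y)(1 − q⁻(y)) p(x|y) = Σ_{x∈B} Σ_{y∈V} m(y) q⁻(y) p(x|y)
 = Σ_{x∈A} Σ_{y∈V} m(x) q(y) p(y|x) = Σ_{x∈B} Σ_{y∈V} m(x)(1 − q(y)) p(y|x)`.
(Here `p y x` is the probability `p(x|y)` of jumping from `y` to `x`.) -/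
theorem Z_four_expressions {V : Type*} [Fintype V] [DecidableEq V]
    (p : V → V → ℝ) (A B : Finset V)
    (hAB : Disjoint A B) (hA : A.Nonempty) (hB : B.Nonempty)
    (hp0 : ∀ x y, 0 ≤ p x y) (hp1 : ∀ x, ∑ y, p x y = 1)
    (m : V → ℝ) (hm0 : ∀ x, 0 < m x) (hm1 : ∑ x, m x = 1)
    (hminv : ∀ x, ∑ y, m y * p y x = m x)
    (q : V → ℝ)
    (hq0 : ∀ x, 0 ≤ q x) (hq1 : ∀ x, q x ≤ 1)
    (hqA : ∀ x ∈ A, q x = 0) (hqB : ∀ x ∈ B, q x = 1)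
    (hqE : ∀ x, x ∉ A ∪ B → q x = ∑ y, p x y * q y)
    (qm : V → ℝ)
    (hqm0 : ∀ x, 0 ≤ qm x) (hqm1 : ∀ x, qm x ≤ 1)
    (hqmA : ∀ x ∈ A, qm x = 1) (hqmB : ∀ x ∈ B, qm x = 0)
    (hqmE : ∀ x, x ∉ A ∪ B → qm x = ∑ y, (m y * p y x / m x) * qm y) :
    (∑ x ∈ A, ∑ y, m y * (1 - qm y) * p y x = ∑ x ∈ B, ∑ y, m y * qm y * p y x) ∧
    (∑ x ∈ B, ∑ y, m y * qm y * p y x = ∑ x ∈ A, ∑ y, m x * q y * p x y) ∧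
    (∑ x ∈ A, ∑ y, m x * q y * p x y = ∑ x ∈ B, ∑ y, m x * (1 - q y) * p x y) := by
  classical
  have hmne : ∀ x : V, m x ≠ 0 := fun x => (hm0 x).ne'
  set T : V → ℝ := fun x => ∑ y, m y * qm y * p y x with hTdef
  set W : V → ℝ := fun x => ∑ y, m x * q y * p x y with hWdef
  -- T x = m x * qm x outside A ∪ B
  have hTC : ∀ x, x ∉ A ∪ B → T x = m x * qm x := by
    intro x hx
    have h := hqmE x hx
    have h2 : ∑ y, (m y * p y x / m x) * qm y = (∑ y, m y * qm y * p y x) / m x := by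
      rw [Finset.sum_div]
      refine Finset.sum_congr rfl fun y _ => ?_
      rw [div_mul_eq_mul_div]
      ring_nf
    rw [h2, eq_div_iff (hmne x)] at h
    simp only [hTdef]
    linarith [h]
  -- W x = m x * q x outside A ∪ B
  have hWC : ∀ x, x ∉ A ∪ B → W x = m x * q x := by
    intro x hx
    have h := hqE x hx
    simp only [hWdef]
    calc (∑ y, m x * q y * p x y) = m x * ∑ y, p x y * q y := by
          rw [Finset.mul_sum]; exact Finset.sum_congr rfl fun y _ => by ring
      _ = m x * q x := by rw [← h]
  -- total sums
  have hTsum : ∑ x, T x = ∑ y, m y * qm y := by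
    simp only [hTdef]
    rw [Finset.sum_comm]
    refine Finset.sum_congr rfl fun y _ => ?_
    calc (∑ x, m y * qm y * p y x) = (m y * qm y) * ∑ x, p y x := by
          rw [Finset.mul_sum]
      _ = m y * qm y := by simp [hp1 y]
  have hWsum : ∑ x, W x = ∑ y, m y * q y := by
    simp only [hWdef]
    rw [Finset.sum_comm]
    refine Finset.sum_congr rfl fun y _ => ?_
    calc (∑ x, m x * q y * p x y) = q y * ∑ x, m x * p x y := by
          rw [Finset.mul_sum]; exact Finset.sum_congr rfl fun x _ => by ring
      _ = q y * m y := by rw [hminv y]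
      _ = m y * q y := by ring
  -- splitting the universe
  have hsplitT : ∀ f : V → ℝ, (∑ x ∈ A, f x) + (∑ x ∈ B, f x) + (∑ x ∈ (A ∪ B)ᶜ, f x) = ∑ x, f x := by
    intro f
    rw [← Finset.sum_union hAB, Finset.sum_add_sum_compl]
  -- balance equation for T
  have hE1 : (∑ x ∈ A, T x) + (∑ x ∈ B, T x) = ∑ x ∈ A, m x := by
    have h1 := hsplitT T
    have h2 : ∑ x ∈ (A ∪ B)ᶜ, T x = ∑ x ∈ (A ∪ B)ᶜ, m x * qm x := by
      refine Finset.sum_congr rfl fun x hx => hTC x (Finset.mem_compl.mp hx)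
    have h3 := hsplitT (fun x => m x * qm x)
    have h4 : ∑ x ∈ A, m x * qm x = ∑ x ∈ A, m x := by
      refine Finset.sum_congr rfl fun x hx => by rw [hqmA x hx, mul_one]
    have h5 : ∑ x ∈ B, m x * qm x = 0 := by
      refine Finset.sum_eq_zero fun x hx => by rw [hqmB x hx, mul_zero]
    rw [hTsum] at h1
    linarith [h1, h3]
  -- balance equation for W
  have hE2 : (∑ x ∈ A, W x) + (∑ x ∈ B, W x) = ∑ x ∈ B, m x := by
    have h1 := hsplitT W
    have h2 : ∑ x ∈ (A ∪ B)ᶜ, W x = ∑ x ∈ (A ∪ B)ᶜ, m x * q x := by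
      refine Finset.sum_congr rfl fun x hx => hWC x (Finset.mem_compl.mp hx)
    have h3 := hsplitT (fun x => m x * q x)
    have h4 : ∑ x ∈ B, m x * q x = ∑ x ∈ B, m x := by
      refine Finset.sum_congr rfl fun x hx => by rw [hqB x hx, mul_one]
    have h5 : ∑ x ∈ A, m x * q x = 0 := by
      refine Finset.sum_eq_zero fun x hx => by rw [hqA x hx, mul_zero]
    rw [hWsum] at h1
    linarith [h1, h3]
  -- cross identity
  have hS : ∑ y, T y * q y = ∑ x, qm x * W x := by
    simp only [hTdef, hWdef]
    have l1 : ∑ x, (∑ y, m y * qm y * p y x) * q x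
        = ∑ x, ∑ y, m y * qm y * p y x * q x :=
      Finset.sum_congr rfl fun x _ => Finset.sum_mul ..
    have l2 : ∑ x, qm x * ∑ y, m x * q y * p x y
        = ∑ x, ∑ y, qm x * (m x * q y * p x y) :=
      Finset.sum_congr rfl fun x _ => Finset.mul_sum ..
    rw [l1, l2, Finset.sum_comm]
    exact Finset.sum_congr rfl fun a _ => Finset.sum_congr rfl fun b _ => by ring
  have hSL : ∑ y, T y * q y = (∑ x ∈ B, T x) + ∑ x ∈ (A ∪ B)ᶜ, m x * qm x * q x := by
    have h1 := hsplitT (fun y => T y * q y)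
    have hA0 : ∑ y ∈ A, T y * q y = 0 :=
      Finset.sum_eq_zero fun y hy => by rw [hqA y hy, mul_zero]
    have hB1 : ∑ y ∈ B, T y * q y = ∑ y ∈ B, T y :=
      Finset.sum_congr rfl fun y hy => by rw [hqB y hy, mul_one]
    have hC1 : ∑ y ∈ (A ∪ B)ᶜ, T y * q y = ∑ y ∈ (A ∪ B)ᶜ, m y * qm y * q y :=
      Finset.sum_congr rfl fun y hy => by rw [hTC y (Finset.mem_compl.mp hy)]
    linarith [h1]
  have hSR : ∑ x, qm x * W x = (∑ x ∈ A, W x) + ∑ x ∈ (A ∪ B)ᶜ, m x * qm x * q x := by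
    have h1 := hsplitT (fun x => qm x * W x)
    have hA1 : ∑ x ∈ A, qm x * W x = ∑ x ∈ A, W x :=
      Finset.sum_congr rfl fun x hx => by rw [hqmA x hx, one_mul]
    have hB0 : ∑ x ∈ B, qm x * W x = 0 :=
      Finset.sum_eq_zero fun x hx => by rw [hqmB x hx, zero_mul]
    have hC1 : ∑ x ∈ (A ∪ B)ᶜ, qm x * W x = ∑ x ∈ (A ∪ B)ᶜ, m x * qm x * q x :=
      Finset.sum_congr rfl fun x hx => by rw [hWC x (Finset.mem_compl.mp hx)]; ring
    linarith [h1]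
  have hE3 : (∑ x ∈ B, T x) = ∑ x ∈ A, W x := by
    have := hS
    rw [hSL, hSR] at this
    linarith
  -- rewrite the target quantities
  have hQ1 : ∑ x ∈ A, ∑ y, m y * (1 - qm y) * p y x = (∑ x ∈ A, m x) - ∑ x ∈ A, T x := by
    rw [← Finset.sum_sub_distrib]
    refine Finset.sum_congr rfl fun x _ => ?_
    have : ∑ y, m y * (1 - qm y) * p y x = (∑ y, m y * p y x) - ∑ y, m y * qm y * p y x := by
      rw [← Finset.sum_sub_distrib]
      exact Finset.sum_congr rfl fun y _ => by ring
    rw [this, hminv x]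
  have hQ4 : ∑ x ∈ B, ∑ y, m x * (1 - q y) * p x y = (∑ x ∈ B, m x) - ∑ x ∈ B, W x := by
    rw [← Finset.sum_sub_distrib]
    refine Finset.sum_congr rfl fun x _ => ?_
    have : ∑ y, m x * (1 - q y) * p x y = (m x * ∑ y, p x y) - ∑ y, m x * q y * p x y := by
      rw [Finset.mul_sum, ← Finset.sum_sub_distrib]
      exact Finset.sum_congr rfl fun y _ => by ring
    rw [this, hp1 x, mul_one]
  have hQ2 : ∑ x ∈ B, ∑ y, m y * qm y * p y x = ∑ x ∈ B, T x := rfl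
  have hQ3 : ∑ x ∈ A, ∑ y, m x * q y * p x y = ∑ x ∈ A, W x := rfl
  refine ⟨?_, ?_, ?_⟩
  · rw [hQ1, hQ2]; linarith [hE1]
  · rw [hQ2, hQ3]; exact hE3
  · rw [hQ3, hQ4]; linarith [hE2]
end

section
/- Let m be a positive invariant probability distribution of p, let q⁻ satisfy the backward committor system, and set Z = Σ_{x∈A} Σ_{y∈V} m(y)(1 − q⁻(y)) p(x|y), assumed positive. Define μ(x) = (1/Z) Σ_{y∈V} m(y)(1 − q⁻(y)) p(x|y) for x ∈ A, and θ(x) = (1/Z) m(x) q⁻(x) for x ∈ Bᶜ, θ(x) = (1/Z) Σ_{y∈V} m(y) q⁻(y) p(x|y) for x ∈ B. Then μ is a probability distribution on A (μ ≥ 0 and Σ_{x∈A} μ(x) = 1) and θ satisfies the first-passage balance equation θ(x) = μ(x)·1_A(x) + Σ_{y∈Bᶜ} θ(y) p(x|y) for every x ∈ V. -/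
open Classical

/-- Let `m` be a positive invariant probability distribution of `p`, let
`q⁻` satisfy the backward committor system (for the time-reversed matrix
`p⁻(y|x) = m(y) p(x|y) / m(x)`), and set `Z = Σ_{x∈A} Σ_{y∈V} m(y)(1 − q⁻(y)) p(x|y)`,
assumed positive.  Define `μ(x) = (1/Z) Σ_{y∈V} m(y)(1 − q⁻(y)) p(x|y)` for `x ∈ A`, and
`θ(x) = (1/Z) m(x) q⁻(x)` for `x ∈ Bᶜ`, `θ(x) = (1/Z) Σ_{y∈V} m(y) q⁻(y) p(x|y)` for
`x ∈ B`.  Then `μ` is a probability distribution on `A` and `θ` satisfies the first-passage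
balance equation `θ(x) = μ(x)·1_A(x) + Σ_{y∈Bᶜ} θ(y) p(x|y)` for every `x ∈ V`. -/
theorem ergodic_theta_satisfies_balance {V : Type*} [Fintype V] [DecidableEq V]
    (p : V → V → ℝ) (A B : Finset V)
    (hAB : Disjoint A B) (hA : A.Nonempty) (hB : B.Nonempty)
    (hp0 : ∀ x y, 0 ≤ p x y) (hp1 : ∀ x, ∑ y, p x y = 1)
    (m : V → ℝ) (hm0 : ∀ x, 0 < m x) (hm1 : ∑ x, m x = 1)
    (hminv : ∀ x, ∑ y, m y * p y x = m x)
    (qm : V → ℝ)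
    (hqm0 : ∀ x, 0 ≤ qm x) (hqm1 : ∀ x, qm x ≤ 1)
    (hqmA : ∀ x ∈ A, qm x = 1) (hqmB : ∀ x ∈ B, qm x = 0)
    (hqmE : ∀ x, x ∉ A ∪ B → qm x = ∑ y, (m y * p y x / m x) * qm y)
    (Z : ℝ) (hZ : Z = ∑ x ∈ A, ∑ y, m y * (1 - qm y) * p y x) (hZpos : 0 < Z)
    (μ θ : V → ℝ)
    (hμ : ∀ x ∈ A, μ x = (1 / Z) * ∑ y, m y * (1 - qm y) * p y x)
    (hθ1 : ∀ x ∉ B, θ x = (1 / Z) * (m x * qm x))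
    (hθ2 : ∀ x ∈ B, θ x = (1 / Z) * ∑ y, m y * qm y * p y x) :
    (∀ x ∈ A, 0 ≤ μ x) ∧
    (∑ x ∈ A, μ x = 1) ∧
    (∀ x, θ x = (if x ∈ A then μ x else 0) + ∑ y ∈ Bᶜ, θ y * p y x) := by
  have key : ∀ x, ∑ y ∈ Bᶜ, θ y * p y x = (1 / Z) * ∑ y, m y * qm y * p y x := by
    intro x
    rw [Finset.mul_sum]
    rw [← Finset.sum_subset (Finset.subset_univ Bᶜ)
      (fun y _ hy => by
        have hyB : y ∈ B := by simpa using hy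
        rw [hqmB y hyB]; ring)]
    apply Finset.sum_congr rfl
    intro y hy
    rw [hθ1 y (by simpa using hy)]
    ring
  refine ⟨?_, ?_, ?_⟩
  · intro x hx
    rw [hμ x hx]
    apply mul_nonneg (by positivity)
    apply Finset.sum_nonneg
    intro y _
    have h1 : 0 ≤ 1 - qm y := by linarith [hqm1 y]
    exact mul_nonneg (mul_nonneg (hm0 y).le h1) (hp0 y x)
  · have : ∑ x ∈ A, μ x = (1 / Z) * ∑ x ∈ A, ∑ y, m y * (1 - qm y) * p y x := by
      rw [Finset.mul_sum]
      exact Finset.sum_congr rfl fun x hx => hμ x hx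
    rw [this, ← hZ]
    field_simp
  · intro x
    rw [key x]
    by_cases hxB : x ∈ B
    · rw [hθ2 x hxB, if_neg (fun hxA => (Finset.disjoint_left.mp hAB hxA) hxB)]
      ring
    · rw [hθ1 x hxB]
      by_cases hxA : x ∈ A
      · rw [if_pos hxA, hμ x hxA, hqmA x hxA]
        have hsplit : ∑ y, m y * (1 - qm y) * p y x + ∑ y, m y * qm y * p y x
            = ∑ y, m y * p y x := by
          rw [← Finset.sum_add_distrib]
          exact Finset.sum_congr rfl fun y _ => by ring
        rw [← hminv x, ← hsplit]
        ring
      · rw [if_neg hxA]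
        have hq : qm x = ∑ y, (m y * p y x / m x) * qm y :=
          hqmE x (by simp [hxA, hxB])
        have hmx := (hm0 x).ne'
        have : m x * qm x = ∑ y, m y * qm y * p y x := by
          rw [hq, Finset.mul_sum]
          exact Finset.sum_congr rfl fun y _ => by field_simp
        rw [this]; ring
end

section
/- The total jump probabilities sum to one: Σ_{y∈I} ∫₀^∞ b_y(u) du = 1. -/
open MeasureTheory

lemma meas_F {f : ℝ → ℝ} (hf : Measurable f) :
    Measurable fun t => ∫ u in Set.Ioi t, f u := by
  have h : ∀ t, (∫ u in Set.Ioi t, f u) = ∫ u, (Set.Ioi t).indicator f u :=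
    fun t => (integral_indicator measurableSet_Ioi).symm
  simp_rw [h]
  refine StronglyMeasurable.measurable (StronglyMeasurable.integral_prod_right (f := fun t u => (Set.Ioi t).indicator f u) ?_)
  have : (Function.uncurry fun t u => (Set.Ioi t).indicator f u) =
      fun p : ℝ × ℝ => if p.1 < p.2 then f p.2 else 0 := by
    ext p; simp [Function.uncurry, Set.indicator_apply]
  rw [this]
  exact (Measurable.ite (measurableSet_lt measurable_fst measurable_snd)
    (hf.comp measurable_snd) measurable_const).stronglyMeasurable

lemma meas_H {φ : ℝ → ℝ} (hφ : Measurable φ) (c : ℝ) :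
    Measurable fun s => ∫ u in Set.Ioo c s, φ u := by
  have h : ∀ s, (∫ u in Set.Ioo c s, φ u) = ∫ u, (Set.Ioo c s).indicator φ u :=
    fun s => (integral_indicator measurableSet_Ioo).symm
  simp_rw [h]
  refine StronglyMeasurable.measurable (StronglyMeasurable.integral_prod_right (f := fun s u => (Set.Ioo c s).indicator φ u) ?_)
  have : (Function.uncurry fun s u => (Set.Ioo c s).indicator φ u) =
      fun p : ℝ × ℝ => if c < p.2 ∧ p.2 < p.1 then φ p.2 else 0 := by
    ext p; simp [Function.uncurry, Set.indicator_apply, Set.mem_Ioo]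
  rw [this]
  refine (Measurable.ite ?_ (hφ.comp measurable_snd) measurable_const).stronglyMeasurable
  exact (measurableSet_lt measurable_const measurable_snd).inter
    (measurableSet_lt measurable_snd measurable_fst)

lemma int_mul_g {f g : ℝ → ℝ} (hfm : Measurable f) (hgm : Measurable g)
    (hfint : IntegrableOn f (Set.Ioi 0)) (hnn : ∀ t, 0 ≤ t → 0 ≤ f t)
    (hg0 : ∀ t, 0 ≤ t → 0 ≤ g t) (hg1 : ∀ t, 0 ≤ t → g t ≤ 1)
    {A : Set ℝ} (hA : MeasurableSet A) (hAsub : A ⊆ Set.Ioi 0) :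
    IntegrableOn (fun t => f t * g t) A := by
  refine Integrable.mono' (hfint.mono_set hAsub) ((hfm.mul hgm).aestronglyMeasurable) ?_
  refine (ae_restrict_iff' hA).2 (Filter.Eventually.of_forall fun t ht => ?_)
  have h0 : (0:ℝ) < t := hAsub ht
  rw [Real.norm_eq_abs, abs_mul, abs_of_nonneg (hnn t h0.le), abs_of_nonneg (hg0 t h0.le)]
  calc f t * g t ≤ f t * 1 := mul_le_mul_of_nonneg_left (hg1 t h0.le) (hnn t h0.le)
  _ = f t := mul_one _

lemma int_mul_g_nonneg {f g : ℝ → ℝ} (hnn : ∀ t, 0 ≤ t → 0 ≤ f t)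
    (hg0 : ∀ t, 0 ≤ t → 0 ≤ g t)
    {A : Set ℝ} (hA : MeasurableSet A) (hAsub : A ⊆ Set.Ioi 0) :
    0 ≤ ∫ t in A, f t * g t :=
  setIntegral_nonneg hA fun t ht =>
    mul_nonneg (hnn t (hAsub ht).le) (hg0 t (hAsub ht).le)

lemma int_mul_g_le_one {f g : ℝ → ℝ} (hfm : Measurable f) (hgm : Measurable g)
    (hfint : IntegrableOn f (Set.Ioi 0)) (hnn : ∀ t, 0 ≤ t → 0 ≤ f t)
    (hone : ∫ u in Set.Ioi (0:ℝ), f u = 1)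
    (hg0 : ∀ t, 0 ≤ t → 0 ≤ g t) (hg1 : ∀ t, 0 ≤ t → g t ≤ 1)
    {A : Set ℝ} (hA : MeasurableSet A) (hAsub : A ⊆ Set.Ioi 0) :
    (∫ t in A, f t * g t) ≤ 1 := by
  have step1 : (∫ t in A, f t * g t) ≤ ∫ t in A, f t := by
    refine setIntegral_mono_on (int_mul_g hfm hgm hfint hnn hg0 hg1 hA hAsub)
      (hfint.mono_set hAsub) hA fun t ht => ?_
    have h0 : (0:ℝ) < t := hAsub ht
    calc f t * g t ≤ f t * 1 := mul_le_mul_of_nonneg_left (hg1 t h0.le) (hnn t h0.le)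
    _ = f t := mul_one _
  have step2 : (∫ t in A, f t) ≤ ∫ t in Set.Ioi (0:ℝ), f t := by
    refine setIntegral_mono_set hfint ?_ (HasSubset.Subset.eventuallyLE hAsub)
    exact (ae_restrict_iff' measurableSet_Ioi).2
      (Filter.Eventually.of_forall fun t ht => hnn t (le_of_lt ht))
  linarith [hone ▸ step2, step1]

lemma swap_lemma {f₁ f₂ g : ℝ → ℝ} (h1m : Measurable f₁) (h2m : Measurable f₂)
    (hgm : Measurable g)
    (h1nn : ∀ t, 0 ≤ t → 0 ≤ f₁ t) (h2nn : ∀ t, 0 ≤ t → 0 ≤ f₂ t)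
    (h1int : IntegrableOn f₁ (Set.Ioi 0)) (h2int : IntegrableOn f₂ (Set.Ioi 0))
    (hg0 : ∀ t, 0 ≤ t → 0 ≤ g t) (hg1 : ∀ t, 0 ≤ t → g t ≤ 1)
    {c : ℝ} (hc : 0 ≤ c) :
    ∫ t in Set.Ioi c, f₁ t * g t * (∫ u in Set.Ioi t, f₂ u)
      = ∫ s in Set.Ioi c, f₂ s * (∫ t in Set.Ioo c s, f₁ t * g t) := by
  have hsub : Set.Ioi c ⊆ Set.Ioi (0:ℝ) := Set.Ioi_subset_Ioi hc
  set H : ℝ → ℝ → ℝ := fun t s => (f₁ t * g t) * (Set.Ioi t).indicator f₂ s with hH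
  have hHm : Measurable (Function.uncurry H) := by
    have : Function.uncurry H = fun p : ℝ × ℝ =>
        (f₁ p.1 * g p.1) * if p.1 < p.2 then f₂ p.2 else 0 := by
      ext p; simp [hH, Function.uncurry, Set.indicator_apply]
    rw [this]
    exact ((h1m.comp measurable_fst).mul (hgm.comp measurable_fst)).mul
      (Measurable.ite (measurableSet_lt measurable_fst measurable_snd)
        (h2m.comp measurable_snd) measurable_const)
  have hHint : Integrable (Function.uncurry H)
      ((volume.restrict (Set.Ioi c)).prod (volume.restrict (Set.Ioi c))) := by
    have hB : Integrable (fun p : ℝ × ℝ => f₁ p.1 * f₂ p.2)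
        ((volume.restrict (Set.Ioi c)).prod (volume.restrict (Set.Ioi c))) :=
      Integrable.mul_prod (h1int.mono_set hsub) (h2int.mono_set hsub)
    refine hB.mono' hHm.aestronglyMeasurable ?_
    rw [Measure.prod_restrict]
    refine (ae_restrict_iff' (measurableSet_Ioi.prod measurableSet_Ioi)).2
      (Filter.Eventually.of_forall fun p hp => ?_)
    obtain ⟨hp1, hp2⟩ := hp
    have h01 : (0:ℝ) < p.1 := lt_of_le_of_lt hc hp1
    have h02 : (0:ℝ) < p.2 := lt_of_le_of_lt hc hp2
    have hb1 : |f₁ p.1 * g p.1| ≤ f₁ p.1 := by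
      rw [abs_mul, abs_of_nonneg (h1nn _ h01.le), abs_of_nonneg (hg0 _ h01.le)]
      calc f₁ p.1 * g p.1 ≤ f₁ p.1 * 1 :=
        mul_le_mul_of_nonneg_left (hg1 _ h01.le) (h1nn _ h01.le)
      _ = f₁ p.1 := mul_one _
    have hb2 : |(Set.Ioi p.1).indicator f₂ p.2| ≤ f₂ p.2 := by
      rw [Set.indicator_apply]
      split
      · rw [abs_of_nonneg (h2nn _ h02.le)]
      · simpa using h2nn _ h02.le
    calc ‖Function.uncurry H p‖ = |f₁ p.1 * g p.1| * |(Set.Ioi p.1).indicator f₂ p.2| := by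
          simp [hH, Function.uncurry, abs_mul]
    _ ≤ f₁ p.1 * f₂ p.2 := by
        exact mul_le_mul hb1 hb2 (abs_nonneg _) (le_trans (abs_nonneg _) hb1)
  have hswap := integral_integral_swap hHint
  have hL : (∫ t in Set.Ioi c, ∫ s in Set.Ioi c, H t s)
      = ∫ t in Set.Ioi c, f₁ t * g t * (∫ u in Set.Ioi t, f₂ u) := by
    refine setIntegral_congr_fun measurableSet_Ioi fun t ht => ?_
    have : (∫ s in Set.Ioi c, (Set.Ioi t).indicator f₂ s) = ∫ u in Set.Ioi t, f₂ u := by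
      rw [setIntegral_indicator measurableSet_Ioi, Set.Ioi_inter_Ioi,
        sup_eq_right.2 (le_of_lt ht)]
    simp only [hH, integral_const_mul, this]
  have hR : (∫ s in Set.Ioi c, ∫ t in Set.Ioi c, H t s)
      = ∫ s in Set.Ioi c, f₂ s * (∫ t in Set.Ioo c s, f₁ t * g t) := by
    refine setIntegral_congr_fun measurableSet_Ioi fun s hs => ?_
    have heq : (fun t => H t s) = fun t =>
        (Set.Iio s).indicator (fun t => f₁ t * g t * f₂ s) t := by
      ext t
      by_cases h : t < s <;>
        simp [hH, Set.indicator_apply, h, Set.mem_Ioi, Set.mem_Iio]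
    rw [heq, setIntegral_indicator measurableSet_Iio, Set.Ioi_inter_Iio,
      integral_mul_const, mul_comm]
  rw [← hL, hswap, hR]


section
variable {f g : ℝ → ℝ}

lemma F_nonneg (hnn : ∀ t, 0 ≤ t → 0 ≤ f t) {t : ℝ} (ht : 0 ≤ t) :
    0 ≤ ∫ u in Set.Ioi t, f u :=
  setIntegral_nonneg measurableSet_Ioi fun u hu => hnn u (le_trans ht (le_of_lt hu))

lemma F_le_one (hnn : ∀ t, 0 ≤ t → 0 ≤ f t)
    (hfint : IntegrableOn f (Set.Ioi 0)) (hone : ∫ u in Set.Ioi (0:ℝ), f u = 1)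
    {t : ℝ} (ht : 0 ≤ t) : (∫ u in Set.Ioi t, f u) ≤ 1 := by
  rw [← hone]
  refine setIntegral_mono_set hfint ((ae_restrict_iff' measurableSet_Ioi).2
    (Filter.Eventually.of_forall fun u hu => hnn u (le_of_lt hu)))
    (HasSubset.Subset.eventuallyLE (Set.Ioi_subset_Ioi ht))

end

lemma key {I : Type*} [Fintype I] [DecidableEq I]
    (ψ : I → ℝ → ℝ) (hm : ∀ y, Measurable (ψ y))
    (hnn : ∀ y t, 0 ≤ t → 0 ≤ ψ y t)
    (hint : ∀ y, IntegrableOn (ψ y) (Set.Ioi 0) volume)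
    (hone : ∀ y, ∫ u in Set.Ioi (0:ℝ), ψ y u = 1)
    {S : Finset I} (hS : S.Nonempty) :
    ∀ c : ℝ, 0 ≤ c →
      ∑ y ∈ S, ∫ t in Set.Ioi c, ψ y t * ∏ z ∈ S.erase y, (∫ u in Set.Ioi t, ψ z u)
        = ∏ z ∈ S, ∫ u in Set.Ioi c, ψ z u := by
  induction hS using Finset.Nonempty.cons_induction with
  | singleton a => intro c hc; simp
  | cons x S hx hS IH =>
    intro c hc
    have hsub : Set.Ioi c ⊆ Set.Ioi (0:ℝ) := Set.Ioi_subset_Ioi hc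
    have hPm : ∀ T : Finset I, Measurable fun t => ∏ z ∈ T, ∫ u in Set.Ioi t, ψ z u :=
      fun T => Finset.measurable_prod T fun z _ => meas_F (hm z)
    have hP0 : ∀ (T : Finset I) (t : ℝ), 0 ≤ t → 0 ≤ ∏ z ∈ T, ∫ u in Set.Ioi t, ψ z u :=
      fun T t ht => Finset.prod_nonneg fun z _ => F_nonneg (hnn z) ht
    have hP1 : ∀ (T : Finset I) (t : ℝ), 0 ≤ t → (∏ z ∈ T, ∫ u in Set.Ioi t, ψ z u) ≤ 1 :=
      fun T t ht => Finset.prod_le_one (fun z _ => F_nonneg (hnn z) ht)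
        (fun z _ => F_le_one (hnn z) (hint z) (hone z) ht)
    simp only [Finset.cons_eq_insert]
    rw [Finset.sum_insert hx, Finset.prod_insert hx, Finset.erase_insert hx]
    have hterm : ∀ y ∈ S,
        (∫ t in Set.Ioi c, ψ y t * ∏ z ∈ (insert x S).erase y, ∫ u in Set.Ioi t, ψ z u)
          = ∫ s in Set.Ioi c, ψ x s *
              ∫ t in Set.Ioo c s, ψ y t * ∏ z ∈ S.erase y, ∫ u in Set.Ioi t, ψ z u := by
      intro y hy
      have hyx : y ≠ x := fun h => hx (h ▸ hy)
      have hxe : x ∉ S.erase y := fun h => hx (Finset.mem_of_mem_erase h)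
      have h := swap_lemma (hm y) (hm x) (hPm (S.erase y)) (hnn y) (hnn x)
        (hint y) (hint x) (fun t ht => hP0 _ t ht) (fun t ht => hP1 _ t ht) hc
      refine Eq.trans ?_ h
      refine setIntegral_congr_fun measurableSet_Ioi fun t _ => ?_
      rw [Finset.erase_insert_of_ne hyx.symm, Finset.prod_insert hxe]
      ring
    rw [Finset.sum_congr rfl hterm]
    have hIooSub : ∀ s : ℝ, Set.Ioo c s ⊆ Set.Ioi (0:ℝ) :=
      fun s u hu => lt_of_le_of_lt hc hu.1
    have hyint : ∀ y ∈ S, IntegrableOn (fun s => ψ x s *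
        ∫ t in Set.Ioo c s, ψ y t * ∏ z ∈ S.erase y, ∫ u in Set.Ioi t, ψ z u)
        (Set.Ioi c) := by
      intro y hy
      exact int_mul_g (hm x) (meas_H ((hm y).mul (hPm (S.erase y))) c) (hint x) (hnn x)
        (fun s _ => int_mul_g_nonneg (hnn y) (fun t ht => hP0 _ t ht)
          measurableSet_Ioo (hIooSub s))
        (fun s _ => int_mul_g_le_one (hm y) (hPm _) (hint y) (hnn y) (hone y)
          (fun t ht => hP0 _ t ht) (fun t ht => hP1 _ t ht)
          measurableSet_Ioo (hIooSub s))
        measurableSet_Ioi hsub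
    rw [← integral_finset_sum S hyint]
    have hptw : ∀ s ∈ Set.Ioi c,
        (∑ y ∈ S, ψ x s *
            ∫ t in Set.Ioo c s, ψ y t * ∏ z ∈ S.erase y, ∫ u in Set.Ioi t, ψ z u)
          = ψ x s * ((∏ z ∈ S, ∫ u in Set.Ioi c, ψ z u)
              - ∏ z ∈ S, ∫ u in Set.Ioi s, ψ z u) := by
      intro s hs
      rw [← Finset.mul_sum]
      congr 1
      have h1 := IH c hc
      have h2 := IH s (le_trans hc (le_of_lt hs))
      have hsplit : ∀ y ∈ S,
          (∫ t in Set.Ioo c s, ψ y t * ∏ z ∈ S.erase y, ∫ u in Set.Ioi t, ψ z u)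
            = (∫ t in Set.Ioi c, ψ y t * ∏ z ∈ S.erase y, ∫ u in Set.Ioi t, ψ z u)
              - ∫ t in Set.Ioi s, ψ y t * ∏ z ∈ S.erase y, ∫ u in Set.Ioi t, ψ z u := by
        intro y hy
        have hIoc : IntegrableOn
            (fun t => ψ y t * ∏ z ∈ S.erase y, ∫ u in Set.Ioi t, ψ z u) (Set.Ioc c s) :=
          int_mul_g (hm y) (hPm _) (hint y) (hnn y) (fun t ht => hP0 _ t ht)
            (fun t ht => hP1 _ t ht) measurableSet_Ioc (fun u hu => lt_of_le_of_lt hc hu.1)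
        have hIoi : IntegrableOn
            (fun t => ψ y t * ∏ z ∈ S.erase y, ∫ u in Set.Ioi t, ψ z u) (Set.Ioi s) :=
          int_mul_g (hm y) (hPm _) (hint y) (hnn y) (fun t ht => hP0 _ t ht)
            (fun t ht => hP1 _ t ht) measurableSet_Ioi
            (Set.Ioi_subset_Ioi (le_trans hc (le_of_lt hs)))
        have hun : (∫ t in Set.Ioi c, ψ y t * ∏ z ∈ S.erase y, ∫ u in Set.Ioi t, ψ z u)
            = (∫ t in Set.Ioc c s, ψ y t * ∏ z ∈ S.erase y, ∫ u in Set.Ioi t, ψ z u)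
              + ∫ t in Set.Ioi s, ψ y t * ∏ z ∈ S.erase y, ∫ u in Set.Ioi t, ψ z u := by
          rw [← setIntegral_union (Set.Ioc_disjoint_Ioi le_rfl) measurableSet_Ioi hIoc hIoi,
            Set.Ioc_union_Ioi_eq_Ioi (le_of_lt hs)]
        rw [← integral_Ioc_eq_integral_Ioo, hun]
        ring
      rw [Finset.sum_congr rfl hsplit, Finset.sum_sub_distrib, h1, h2]
    rw [setIntegral_congr_fun measurableSet_Ioi hptw]
    have hPint : IntegrableOn
        (fun s => ψ x s * ∏ z ∈ S, ∫ u in Set.Ioi s, ψ z u) (Set.Ioi c) :=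
      int_mul_g (hm x) (hPm S) (hint x) (hnn x) (fun t ht => hP0 _ t ht)
        (fun t ht => hP1 _ t ht) measurableSet_Ioi hsub
    have hconst : IntegrableOn
        (fun s => ψ x s * ∏ z ∈ S, ∫ u in Set.Ioi c, ψ z u) (Set.Ioi c) :=
      ((hint x).mono_set hsub).mul_const _
    have hfin : (∫ s in Set.Ioi c, ψ x s * ((∏ z ∈ S, ∫ u in Set.Ioi c, ψ z u)
          - ∏ z ∈ S, ∫ u in Set.Ioi s, ψ z u))
        = (∫ s in Set.Ioi c, ψ x s) * (∏ z ∈ S, ∫ u in Set.Ioi c, ψ z u)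
          - ∫ s in Set.Ioi c, ψ x s * ∏ z ∈ S, ∫ u in Set.Ioi s, ψ z u := by
      simp_rw [mul_sub]
      rw [integral_sub hconst hPint, integral_mul_const]
    rw [hfin]
    ring

/-- Let `I` be a finite nonempty set and, for each `y ∈ I`, let
`ψ_y : [0,∞) → [0,∞)` be a measurable probability density (`∫₀^∞ ψ_y = 1`).  Define the
jump-time densities `b_y(t) = ψ_y(t) · ∏_{z∈I, z≠y} ∫_t^∞ ψ_z(u) du`.  Then the total jump
probabilities sum to one: `Σ_{y∈I} ∫₀^∞ b_y(u) du = 1`. -/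
theorem total_jump_probabilities_sum_to_one
    {I : Type*} [Fintype I] [DecidableEq I] [Nonempty I]
    (ψ : I → ℝ → ℝ)
    (hψ_meas : ∀ y, Measurable (ψ y))
    (hψ_nonneg : ∀ y t, 0 ≤ t → 0 ≤ ψ y t)
    (hψ_int : ∀ y, IntegrableOn (ψ y) (Set.Ioi 0))
    (hψ_one : ∀ y, ∫ u in Set.Ioi (0 : ℝ), ψ y u = 1)
    (b : I → ℝ → ℝ)
    (hb : ∀ y t, b y t = ψ y t * ∏ z ∈ Finset.univ.erase y, ∫ u in Set.Ioi t, ψ z u) :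
    ∑ y, ∫ u in Set.Ioi (0 : ℝ), b y u = 1 := by
  simp_rw [hb]
  rw [key ψ hψ_meas hψ_nonneg hψ_int hψ_one Finset.univ_nonempty 0 le_rfl]
  simp [hψ_one]
end
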